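/- arXiv:2310.05385 — 6 statements merged into one kernel-verified Lean document; each statement's English description precedes it below -/
import Mathlib

section
/- If a hypergraph H = (V, E) is α-acyclic (i.e., admits a join tree), then for every vertex x ∈ V, the hypergraph obtained by removing x from every hyperedge of H is also α-acyclic. -/
/-!
Label each node `K` of a join tree by its trace `K \ {x}`. Call a hyperedge canonical if its
trace is nonempty and it is the hyperedge containing `x` among those with that trace, when there
is one; canonical hyperedges correspond to the hyperedges of `H ∖ x`. Fix a canonical anchor `a`,
containing `x` if possible, and send every node to the first canonical node on its path towards
`a`. The fibres of this map are subtrees, so contracting them leaves a tree on the hyperedges of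
`H ∖ x`. Traces only grow on the way to the canonical node, because paths into the connected set
of nodes containing `x` all start with the same edge; hence the running intersection property
survives the contraction.
-/

variable {V : Type*}

/-- A join tree of a hypergraph with hyperedge collection `E`: a tree (acyclic,
preconnected graph) on the hyperedges such that for every vertex `v`, the set of
nodes whose hyperedges contain `v` induces a connected (preconnected) subgraph. -/
def IsJoinTree (E : Set (Set V)) (T : SimpleGraph E) : Prop :=
  T.IsAcyclic ∧ T.Preconnected ∧
    ∀ v : V, (T.induce {K : ↥E | v ∈ (K : Set V)}).Preconnected

/-- A hypergraph is α-acyclic if it admits a join tree. -/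
def AlphaAcyclic (E : Set (Set V)) : Prop :=
  ∃ T : SimpleGraph E, IsJoinTree E T

/-- Remove a vertex from every hyperedge, discarding emptied hyperedges. -/
def removeVertex (E : Set (Set V)) (x : V) : Set (Set V) :=
  {K' | ∃ K ∈ E, K' = K \ {x} ∧ K' ≠ ∅}

/-- A signed hypergraph `(V, E⁺, E⁻)` is signed-acyclic if for every `S ⊆ E⁻`,
the hypergraph `(V, E⁺ ∪ S)` is α-acyclic. -/
def SignedAcyclic (Ep En : Set (Set V)) : Prop :=
  ∀ S ⊆ En, AlphaAcyclic (Ep ∪ S)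

namespace SimpleGraph

variable {α β : Type*} {G : SimpleGraph α}

lemma Reachable.map_of_adj_or_eq {H : SimpleGraph β} (f : α → β)
    (hf : ∀ ⦃a b⦄, G.Adj a b → f a = f b ∨ H.Adj (f a) (f b)) {a b : α}
    (h : G.Reachable a b) : H.Reachable (f a) (f b) := by
  obtain ⟨p⟩ := h
  induction p with
  | nil => rfl
  | cons hadj _ ih =>
    rcases hf hadj with heq | hadj'
    · rwa [heq]
    · exact hadj'.reachable.trans ih

lemma exists_walk_of_preconnected_induce {s : Set α} (hs : (G.induce s).Preconnected)
    {u v : α} (hu : u ∈ s) (hv : v ∈ s) : ∃ p : G.Walk u v, ∀ w ∈ p.support, w ∈ s := by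
  obtain ⟨q⟩ := hs ⟨u, hu⟩ ⟨v, hv⟩
  refine ⟨q.map (Embedding.induce s).toHom, fun w hw => ?_⟩
  obtain ⟨w, -, rfl⟩ := List.mem_map.mp ((Walk.support_map _ _) ▸ hw)
  exact w.2

namespace IsAcyclic

variable {s : Set α}

lemma support_subset_of_preconnected_induce (hG : G.IsAcyclic)
    (hs : (G.induce s).Preconnected) {u v : α} {p : G.Walk u v} (hp : p.IsPath)
    (hu : u ∈ s) (hv : v ∈ s) : ∀ w ∈ p.support, w ∈ s := by
  classical
  obtain ⟨q, hq⟩ := exists_walk_of_preconnected_induce hs hu hv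
  obtain rfl : p = q.bypass :=
    congrArg Subtype.val ((hG.subsingleton_path u v).elim ⟨p, hp⟩ ⟨_, q.bypass_isPath⟩)
  exact fun w hw => hq w (q.support_bypass_subset_support hw)

lemma snd_eq_of_preconnected_induce (hG : G.IsAcyclic)
    (hs : (G.induce s).Preconnected) {m b c : α} {p : G.Walk m b} {q : G.Walk m c}
    (hp : p.IsPath) (hq : q.IsPath) (hm : m ∉ s) (hb : b ∈ s) (hc : c ∈ s) :
    p.snd = q.snd := by
  by_contra hne
  have hpn : ¬p.Nil := Walk.not_nil_of_ne (by rintro rfl; exact hm hb)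
  have hqn : ¬q.Nil := Walk.not_nil_of_ne (by rintro rfl; exact hm hc)
  obtain ⟨r, hr⟩ := exists_walk_of_preconnected_induce hs hc hb
  have hmp : m ∉ p.tail.support :=
    (List.nodup_cons.mp (p.cons_support_tail hpn ▸ hp.support_nodup)).1
  have hmq : m ∉ q.tail.support :=
    (List.nodup_cons.mp (q.cons_support_tail hqn ▸ hq.support_nodup)).1
  let w := (q.tail.append r).append p.tail.reverse
  have hmw : m ∉ w.support := by
    simp only [w, Walk.mem_support_append_iff, Walk.support_reverse, List.mem_reverse]
    rintro ((h | h) | h)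
    exacts [hmq h, hm (hr m h), hmp h]
  have hstep : (G.deleteEdges {s(m, p.snd)}).Adj m q.snd := by
    rw [deleteEdges_adj, Set.mem_singleton_iff, Sym2.congr_right]
    exact ⟨q.adj_snd hqn, Ne.symm hne⟩
  exact isAcyclic_iff_forall_adj_isBridge.mp hG (p.adj_snd hpn)
    (hstep.reachable.trans ⟨w.toDeleteEdge _ fun h => hmw (w.fst_mem_support_of_mem_edges h)⟩)

end IsAcyclic

def contract (G : SimpleGraph α) (f : α → β) : SimpleGraph β where
  Adj A B := A ≠ B ∧ ∃ a b, f a = A ∧ f b = B ∧ G.Adj a b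
  symm := ⟨fun _ _ ⟨hne, a, b, ha, hb, hab⟩ => ⟨hne.symm, b, a, hb, ha, hab.symm⟩⟩
  loopless := ⟨fun _ h => h.1 rfl⟩

variable {f : α → β}

@[simp]
lemma contract_adj {A B : β} :
    (G.contract f).Adj A B ↔ A ≠ B ∧ ∃ a b, f a = A ∧ f b = B ∧ G.Adj a b :=
  Iff.rfl

lemma adj_or_eq_contract {a b : α} (h : G.Adj a b) :
    f a = f b ∨ (G.contract f).Adj (f a) (f b) :=
  or_iff_not_imp_left.mpr fun hne => ⟨hne, a, b, rfl, rfl, h⟩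

lemma Preconnected.contract (hG : G.Preconnected) (hf : Function.Surjective f) :
    (G.contract f).Preconnected := by
  intro A B
  obtain ⟨a, rfl⟩ := hf A
  obtain ⟨b, rfl⟩ := hf B
  exact (hG a b).map_of_adj_or_eq f fun _ _ => adj_or_eq_contract

lemma Preconnected.contract_induce_image {s : Set α} (hs : (G.induce s).Preconnected) :
    ((G.contract f).induce (f '' s)).Preconnected := by
  rintro ⟨_, a, ha, rfl⟩ ⟨_, b, hb, rfl⟩
  refine (hs ⟨a, ha⟩ ⟨b, hb⟩).map_of_adj_or_eq (s.mapsTo_image f).restrict fun u v h => ?_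
  rcases adj_or_eq_contract (f := f) h with heq | hadj
  exacts [Or.inl (Subtype.ext heq), Or.inr hadj]

lemma Reachable.of_contract (hf : ∀ a b, f a = f b → G.Reachable a b) {a b : α}
    (h : (G.contract f).Reachable (f a) (f b)) : G.Reachable a b := by
  obtain ⟨p⟩ := h
  suffices ∀ {A B : β} (p : (G.contract f).Walk A B) (a b : α), f a = A → f b = B →
      G.Reachable a b from this p a b rfl rfl
  intro A B p
  induction p with
  | nil => exact fun a b ha hb => hf a b (ha.trans hb.symm)
  | cons hadj _ ih =>
    obtain ⟨-, c, d, rfl, rfl, hcd⟩ := contract_adj.mp hadj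
    exact fun a b ha hb => (hf a c ha).trans (hcd.reachable.trans (ih d b rfl hb))

/-- Every edge of the contraction lifts to a bridge of `G`, and removing that bridge keeps the
fibres connected. -/
theorem IsAcyclic.contract (hG : G.IsAcyclic)
    (hf : ∀ a b, f a = f b → ∃ p : G.Walk a b, ∀ w ∈ p.support, f w = f a) :
    (G.contract f).IsAcyclic := by
  rw [isAcyclic_iff_forall_adj_isBridge]
  intro A B hAB hreach
  obtain ⟨hne, a, b, rfl, rfl, hab⟩ := contract_adj.mp hAB
  refine isAcyclic_iff_forall_adj_isBridge.mp hG hab (Reachable.of_contract (f := f) ?_ ?_)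
  · intro u w huw
    obtain ⟨p, hp⟩ := hf u w huw
    refine ⟨p.toDeleteEdge _ fun he => hne ?_⟩
    exact (hp a (p.fst_mem_support_of_mem_edges he)).trans
      (hp b (p.snd_mem_support_of_mem_edges he)).symm
  · refine hreach.mono fun A B h => ?_
    obtain ⟨hAB', hnot⟩ := deleteEdges_adj.mp h
    obtain ⟨hAB, c, d, hc, hd, hcd⟩ := contract_adj.mp hAB'
    refine ⟨hAB, c, d, hc, hd, ?_⟩
    refine (deleteEdges_adj ..).mpr ⟨hcd, fun h => hnot ?_⟩
    rw [Set.mem_singleton_iff] at h ⊢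
    rw [← hc, ← hd, ← Sym2.map_mk, ← Sym2.map_mk, h]

namespace Preconnected

variable (hG : G.Preconnected)

noncomputable def step (u a : α) : α := (hG u a).exists_path_of_dist.choose.snd

lemma exists_isPath_snd_eq_step (u a : α) : ∃ p : G.Walk u a, p.IsPath ∧ p.snd = hG.step u a :=
  ⟨_, (hG u a).exists_path_of_dist.choose_spec.1, rfl⟩

lemma adj_step {u a : α} (h : u ≠ a) : G.Adj u (hG.step u a) :=
  Walk.adj_snd (Walk.not_nil_of_ne h)

lemma dist_step_lt {u a : α} (h : u ≠ a) : G.dist (hG.step u a) a < G.dist u a := by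
  obtain ⟨-, hlen⟩ := (hG u a).exists_path_of_dist.choose_spec
  have h1 := dist_le (hG u a).exists_path_of_dist.choose.tail
  have h2 := (hG u a).exists_path_of_dist.choose.length_tail_add_one (Walk.not_nil_of_ne h)
  unfold step
  omega

noncomputable def climb (a : α) (R : α → Prop) (u : α) : α :=
  open scoped Classical in
  if R u ∨ u = a then u else climb a R (hG.step u a)
termination_by G.dist u a
decreasing_by exact hG.dist_step_lt (by tauto)

variable {a : α} {R : α → Prop} {u : α}

lemma climb_of (h : R u ∨ u = a) : hG.climb a R u = u := by
  rw [climb, if_pos h]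

lemma climb_of_not (h : ¬(R u ∨ u = a)) : hG.climb a R u = hG.climb a R (hG.step u a) := by
  rw [climb, if_neg h]

lemma climb_spec (ha : R a) (u : α) : R (hG.climb a R u) := by
  induction u using climb.induct hG a R with
  | case1 u h =>
    rw [hG.climb_of h]
    rcases h with h | rfl
    exacts [h, ha]
  | case2 u h ih => rwa [hG.climb_of_not h]

lemma climb_induction {P : α → Prop} (hP : ∀ w, ¬(R w ∨ w = a) → P w → P (hG.step w a))
    (hu : P u) : P (hG.climb a R u) := by
  induction u using climb.induct hG a R with
  | case1 u h => rwa [hG.climb_of h]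
  | case2 u h ih => rw [hG.climb_of_not h]; exact ih (hP u h hu)

lemma exists_walk_climb (u : α) :
    ∃ p : G.Walk u (hG.climb a R u), ∀ w ∈ p.support, hG.climb a R w = hG.climb a R u := by
  induction u using climb.induct hG a R with
  | case1 u h =>
    rw [hG.climb_of h]
    exact ⟨.nil, by simp [hG.climb_of h]⟩
  | case2 u h ih =>
    obtain ⟨p, hp⟩ := ih
    rw [hG.climb_of_not h]
    refine ⟨.cons (hG.adj_step fun hu => h (Or.inr hu)) p, ?_⟩
    simpa [hG.climb_of_not h] using hp

lemma exists_walk_of_climb_eq {u w : α} (h : hG.climb a R u = hG.climb a R w) :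
    ∃ p : G.Walk u w, ∀ z ∈ p.support, hG.climb a R z = hG.climb a R u := by
  obtain ⟨p, hp⟩ := hG.exists_walk_climb (a := a) (R := R) u
  obtain ⟨q, hq⟩ := hG.exists_walk_climb (a := a) (R := R) w
  refine ⟨p.append (q.reverse.copy h.symm rfl), fun z hz => ?_⟩
  rw [Walk.mem_support_append_iff, Walk.support_copy, Walk.support_reverse, List.mem_reverse] at hz
  rcases hz with hz | hz
  exacts [hp z hz, (hq z hz).trans h.symm]

end Preconnected

end SimpleGraph

open SimpleGraph

section Hypergraph

variable {E : Set (Set V)} {x : V}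

/-- The hyperedges with a given nonempty trace `K \ {x}` are among `K \ {x}` and
`insert x (K \ {x})`; the canonical one is the latter when it is present. -/
def IsCanonicalEdge (E : Set (Set V)) (x : V) (K : Set V) : Prop :=
  (K \ {x}).Nonempty ∧ (x ∈ K ∨ insert x K ∉ E)

lemma diff_mem_removeVertex {K : Set V} (hK : K ∈ E) (hne : (K \ {x}).Nonempty) :
    K \ {x} ∈ removeVertex E x :=
  ⟨K, hK, rfl, hne.ne_empty⟩

lemma notMem_of_mem_removeVertex {A : Set V} (hA : A ∈ removeVertex E x) : x ∉ A := by
  obtain ⟨K, -, rfl, -⟩ := hA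
  simp

lemma exists_isCanonicalEdge {A : Set V} (hA : A ∈ removeVertex E x) :
    ∃ K ∈ E, IsCanonicalEdge E x K ∧ K \ {x} = A := by
  obtain ⟨K, hK, rfl, hne⟩ := hA
  have hne' : (K \ {x}).Nonempty := Set.nonempty_iff_ne_empty.mpr hne
  by_cases hins : insert x K ∈ E
  · refine ⟨insert x K, hins, ?_, Set.insert_sdiff_of_mem K (Set.mem_singleton x)⟩
    exact ⟨by rwa [Set.insert_sdiff_of_mem K (Set.mem_singleton x)], .inl (Set.mem_insert x K)⟩
  · exact ⟨K, hK, ⟨hne', .inr hins⟩, rfl⟩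

lemma not_isCanonicalEdge {K : Set V} (hne : (K \ {x}).Nonempty)
    (h : ¬IsCanonicalEdge E x K) : x ∉ K ∧ insert x K ∈ E := by
  simpa [IsCanonicalEdge, hne, not_or] using h

lemma IsCanonicalEdge.eq_of_sdiff_eq {K L : Set V} (hK : K ∈ E) (hL : L ∈ E)
    (hKc : IsCanonicalEdge E x K) (hLc : IsCanonicalEdge E x L) (h : K \ {x} = L \ {x}) :
    K = L := by
  have hmem : ∀ {K L : Set V}, K ∈ E → IsCanonicalEdge E x L → K \ {x} = L \ {x} →
      x ∈ K → x ∈ L := by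
    intro K L hK hLc h hxK
    by_contra hxL
    refine hLc.2.resolve_left hxL ?_
    rwa [← Set.sdiff_singleton_eq_self hxL, ← h, Set.insert_sdiff_self_of_mem hxK]
  ext y
  by_cases hy : y = x
  · subst hy
    exact ⟨hmem hK hLc h, hmem hL hKc h.symm⟩
  · simpa [hy] using congrArg (y ∈ ·) h

lemma exists_anchor (hE : (removeVertex E x).Nonempty) :
    ∃ a ∈ E, IsCanonicalEdge E x a ∧
      ((∃ K ∈ E, x ∈ K ∧ (K \ {x}).Nonempty) → x ∈ a) := by
  by_cases h : ∃ K ∈ E, x ∈ K ∧ (K \ {x}).Nonempty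
  · obtain ⟨K, hK, hxK, hne⟩ := h
    exact ⟨K, hK, ⟨hne, .inl hxK⟩, fun _ => hxK⟩
  · obtain ⟨K, hK, hKc, -⟩ := exists_isCanonicalEdge hE.some_mem
    exact ⟨K, hK, hKc, fun h' => absurd h' h⟩

lemma alphaAcyclic_empty : AlphaAcyclic (∅ : Set (Set V)) :=
  ⟨⊥, fun u => u.2.elim, fun u => u.2.elim, fun _ u => u.1.2.elim⟩

variable {T : SimpleGraph E} (hT : IsJoinTree E T) (a : E)

variable (x) in
noncomputable def IsJoinTree.toCanonical (u : E) : E :=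
  hT.2.1.climb a (fun K => IsCanonicalEdge E x K) u

variable {a}

lemma IsJoinTree.isCanonicalEdge_toCanonical (ha : IsCanonicalEdge E x a) (u : E) :
    IsCanonicalEdge E x (hT.toCanonical x a u) :=
  hT.2.1.climb_spec (R := fun K : E => IsCanonicalEdge E x K) ha u

lemma IsJoinTree.toCanonical_of_isCanonicalEdge {u : E} (hu : IsCanonicalEdge E x u) :
    hT.toCanonical x a u = u :=
  hT.2.1.climb_of (.inl hu)

/-- A noncanonical `w ∋ v` has `x ∉ w` and `insert x w ∈ E`; as `x ∈ a`, the step from `w` towards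
`a` is the step towards `insert x w`, which lands in a hyperedge containing `v`. -/
lemma IsJoinTree.mem_toCanonical (hax : (∃ K ∈ E, x ∈ K ∧ (K \ {x}).Nonempty) → x ∈ a.1)
    {v : V} (hvx : v ≠ x) {u : E} (hv : v ∈ u.1) : v ∈ (hT.toCanonical x a u).1 := by
  refine hT.2.1.climb_induction (P := fun w : E => v ∈ w.1) (fun w hw hvw => ?_) hv
  have hne : (w.1 \ {x}).Nonempty := ⟨v, hvw, hvx⟩
  obtain ⟨hxw, hins⟩ := not_isCanonicalEdge hne fun h => hw (.inl h)
  have hxa : x ∈ a.1 := hax ⟨_, hins, Set.mem_insert x _, by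
    rwa [Set.insert_sdiff_of_mem _ (Set.mem_singleton x)]⟩
  obtain ⟨p, hp, hpstep⟩ := hT.2.1.exists_isPath_snd_eq_step w a
  classical
  let q := (hT.2.1 w ⟨_, hins⟩).some.bypass
  have hq : q.IsPath := Walk.bypass_isPath _
  rw [← hpstep, hT.1.snd_eq_of_preconnected_induce (hT.2.2 x) hp hq hxw hxa (Set.mem_insert x _)]
  exact hT.1.support_subset_of_preconnected_induce (hT.2.2 v) hq hvw (Set.mem_insert_of_mem x hvw)
    _ (q.getVert_mem_support 1)

variable (x) in
noncomputable def IsJoinTree.trace (ha : IsCanonicalEdge E x a) (u : E) : removeVertex E x :=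
  ⟨(hT.toCanonical x a u).1 \ {x},
    diff_mem_removeVertex (hT.toCanonical x a u).2 (hT.isCanonicalEdge_toCanonical ha u).1⟩

lemma IsJoinTree.trace_surjective (ha : IsCanonicalEdge E x a) :
    Function.Surjective (hT.trace x ha) := by
  rintro ⟨A, hA⟩
  obtain ⟨K, hK, hKc, rfl⟩ := exists_isCanonicalEdge hA
  refine ⟨⟨K, hK⟩, Subtype.ext ?_⟩
  simp only [IsJoinTree.trace, hT.toCanonical_of_isCanonicalEdge (u := ⟨K, hK⟩) hKc]

lemma IsJoinTree.exists_walk_of_trace_eq (ha : IsCanonicalEdge E x a) {u w : E}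
    (h : hT.trace x ha u = hT.trace x ha w) :
    ∃ p : T.Walk u w, ∀ z ∈ p.support, hT.trace x ha z = hT.trace x ha u := by
  have hc : hT.toCanonical x a u = hT.toCanonical x a w :=
    Subtype.ext <| (hT.isCanonicalEdge_toCanonical ha u).eq_of_sdiff_eq
      (hT.toCanonical x a u).2 (hT.toCanonical x a w).2 (hT.isCanonicalEdge_toCanonical ha w)
      (congrArg Subtype.val h)
  obtain ⟨p, hp⟩ := hT.2.1.exists_walk_of_climb_eq hc
  exact ⟨p, fun z hz => by simp only [IsJoinTree.trace, IsJoinTree.toCanonical, hp z hz]⟩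

lemma IsJoinTree.image_trace (ha : IsCanonicalEdge E x a)
    (hax : (∃ K ∈ E, x ∈ K ∧ (K \ {x}).Nonempty) → x ∈ a.1) {v : V} (hvx : v ≠ x) :
    hT.trace x ha '' {K | v ∈ K.1} = {A | v ∈ A.1} := by
  ext A
  constructor
  · rintro ⟨K, hK, rfl⟩
    exact ⟨hT.mem_toCanonical hax hvx hK, hvx⟩
  · intro hv
    obtain ⟨K, hK, hKc, hKA⟩ := exists_isCanonicalEdge A.2
    refine ⟨⟨K, hK⟩, ?_, Subtype.ext ?_⟩
    · exact (hKA ▸ hv : v ∈ K \ {x}).1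
    · simp only [IsJoinTree.trace, hT.toCanonical_of_isCanonicalEdge (u := ⟨K, hK⟩) hKc, hKA]

theorem IsJoinTree.contract_trace (ha : IsCanonicalEdge E x a)
    (hax : (∃ K ∈ E, x ∈ K ∧ (K \ {x}).Nonempty) → x ∈ a.1) :
    IsJoinTree (removeVertex E x) (T.contract (hT.trace x ha)) := by
  refine ⟨hT.1.contract fun u w => hT.exists_walk_of_trace_eq ha,
    hT.2.1.contract (hT.trace_surjective ha), fun v => ?_⟩
  by_cases hvx : v = x
  · subst hvx
    exact fun A _ => (notMem_of_mem_removeVertex A.1.2 A.2).elim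
  · rw [← hT.image_trace ha hax hvx]
    exact (hT.2.2 v).contract_induce_image

end Hypergraph

/-- If a hypergraph is α-acyclic, then removing any vertex `x` from every
hyperedge yields an α-acyclic hypergraph. -/
theorem alphaAcyclic_removeVertex (E : Set (Set V)) (x : V)
    (h : AlphaAcyclic E) : AlphaAcyclic (removeVertex E x) := by
  obtain ⟨T, hT⟩ := h
  rcases (removeVertex E x).eq_empty_or_nonempty with hE | hE
  · exact hE ▸ alphaAcyclic_empty
  · obtain ⟨a, haE, ha, hax⟩ := exists_anchor hE
    exact ⟨_, hT.contract_trace (a := ⟨a, haE⟩) ha hax⟩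
end

section
/- If a hypergraph H = (V, E) is α-acyclic and R, S are two distinct hyperedges in E with R ⊆ S, then the hypergraph H' = (V, E ∖ {R}) obtained by deleting the hyperedge R is also α-acyclic. -/
variable {V : Type*}

/-!
Let `T` be a join tree of `E`. Each vertex of `R` lies in both ends of the `T`-path from `R` to
`S`, hence in every node of it, since its nodes form a subtree; so the neighbour `N` of `R` on
this path contains `R`. Contracting the tree edge `R N` onto `N` yields a join tree of
`E \ {R}`: contracting an edge of a tree gives a tree, and because `R ⊆ N` the nodes containing
a vertex `v` are mapped onto the nodes of the new tree containing `v`.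
-/

open Function

namespace SimpleGraph

variable {α β : Type*} {G : SimpleGraph α}

theorem Reachable.of_forall_adj {H : SimpleGraph β} (f : α → β)
    (hf : ∀ x y, G.Adj x y → H.Reachable (f x) (f y)) {x y : α} (h : G.Reachable x y) :
    H.Reachable (f x) (f y) := by
  simp only [reachable_iff_reflTransGen] at h hf ⊢
  exact Relation.ReflTransGen.lift' f hf _ _ h

theorem Adj.reachable_map (f : α → β) {x y : α} (h : G.Adj x y) :
    (G.map f).Reachable (f x) (f y) := by
  by_cases hxy : f x = f y
  · exact hxy ▸ Reachable.refl _
  · exact (map_adj_apply' h hxy).reachable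

theorem Preconnected.map_of_surjective (hG : G.Preconnected) {f : α → β} (hf : Surjective f) :
    (G.map f).Preconnected := by
  intro a b
  obtain ⟨x, rfl⟩ := hf a
  obtain ⟨y, rfl⟩ := hf b
  exact (hG x y).of_forall_adj f fun _ _ h => h.reachable_map f

theorem map_induce_restrict_le (f : α → β) {s : Set α} {t : Set β} (hst : Set.MapsTo f s t) :
    (G.induce s).map (hst.restrict f s t) ≤ (G.map f).induce t := by
  rintro _ _ ⟨hne, x, y, hxy, rfl, rfl⟩
  exact ⟨fun h => hne (Subtype.ext h), x, y, hxy, rfl, rfl⟩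

theorem IsAcyclic.map_of_isClique_fiber (hG : G.IsAcyclic) {f : α → β}
    (hf : ∀ b, G.IsClique (f ⁻¹' {b})) : (G.map f).IsAcyclic := by
  classical
  rw [isAcyclic_iff_forall_adj_isBridge]
  rintro _ _ ⟨hne, x, y, hxy, rfl, rfl⟩ hreach
  have : Nonempty α := ⟨x⟩
  -- Vertices with the same image are equal or adjacent, so a walk from `f x` to `f y` avoiding
  -- the edge `f x - f y` lifts through a section of `f` to one from `x` to `y` avoiding `x - y`.
  have reachable_of_eq : ∀ x' y', f x' = f y' → (G.deleteEdges {s(x, y)}).Reachable x' y' := by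
    intro x' y' h
    by_cases hxy' : x' = y'
    · exact hxy' ▸ Reachable.refl _
    refine (deleteEdges_adj.mpr ⟨hf (f y') h rfl hxy', ?_⟩).reachable
    intro he
    rcases Sym2.eq_iff.mp (Set.mem_singleton_iff.mp he) with ⟨rfl, rfl⟩ | ⟨rfl, rfl⟩
    exacts [hne h, hne h.symm]
  have lift_adj : ∀ a b, ((G.map f).deleteEdges {s(f x, f y)}).Adj a b →
      (G.deleteEdges {s(x, y)}).Reachable (invFun f a) (invFun f b) := by
    intro a b hab
    obtain ⟨⟨-, x', y', hxy', rfl, rfl⟩, hne'⟩ := deleteEdges_adj.mp hab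
    have hadj : (G.deleteEdges {s(x, y)}).Adj x' y' := deleteEdges_adj.mpr
      ⟨hxy', fun he => hne' (congrArg (Sym2.map f) (Set.mem_singleton_iff.mp he))⟩
    exact (reachable_of_eq _ _ (invFun_eq ⟨x', rfl⟩)).trans
      (hadj.reachable.trans (reachable_of_eq _ _ (invFun_eq ⟨y', rfl⟩).symm))
  refine isBridge_iff.mp (isAcyclic_iff_forall_adj_isBridge.mp hG hxy) ?_
  exact (reachable_of_eq _ _ (invFun_eq ⟨x, rfl⟩).symm).trans
    ((hreach.of_forall_adj _ lift_adj).trans (reachable_of_eq _ _ (invFun_eq ⟨y, rfl⟩)))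

theorem IsAcyclic.mem_of_mem_support_path (hG : G.IsAcyclic) {s : Set α}
    (hs : (G.induce s).Preconnected) {x y z : α} (hx : x ∈ s) (hy : y ∈ s) (p : G.Path x y)
    (hz : z ∈ p.1.support) : z ∈ s := by
  classical
  obtain ⟨q⟩ := hs ⟨x, hx⟩ ⟨y, hy⟩
  let q' := q.map (Embedding.induce s).toHom
  rw [(hG.subsingleton_path x y).elim p q'.toPath] at hz
  obtain ⟨z', -, rfl⟩ :=
    List.mem_map.mp (Walk.support_map _ q ▸ q'.support_toPath_subset_support hz)
  exact z'.2

end SimpleGraph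

section JoinTree

variable {E : Set (Set V)}

noncomputable def collapseOnto (R : Set V) (N : ↥(E \ {R})) (K : ↥E) : ↥(E \ {R}) :=
  if h : (K : Set V) = R then N else ⟨K, K.2, h⟩

theorem collapseOnto_inclusion (R : Set V) (N K : ↥(E \ {R})) :
    collapseOnto R N (Set.inclusion Set.sdiff_subset K) = K :=
  dif_neg K.2.2

theorem subset_collapseOnto {R : Set V} {N : ↥(E \ {R})} (hRN : R ⊆ N) (K : ↥E) :
    (K : Set V) ⊆ collapseOnto R N K := by
  unfold collapseOnto
  split_ifs with h
  · exact h ▸ hRN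
  · exact subset_rfl

theorem isClique_collapseOnto_fiber {T : SimpleGraph E} {R : Set V} {N : ↥(E \ {R})}
    (hR : R ∈ E) (hadj : T.Adj ⟨R, hR⟩ (Set.inclusion Set.sdiff_subset N)) (K : ↥(E \ {R})) :
    T.IsClique (collapseOnto R N ⁻¹' {K}) := by
  intro x hx y hy hxy
  simp only [Set.mem_preimage, Set.mem_singleton_iff, collapseOnto] at hx hy
  split_ifs at hx hy with hxR hyR hyR
  · exact absurd (Subtype.ext (hxR.trans hyR.symm)) hxy
  · have hyN : y = Set.inclusion Set.sdiff_subset N := Subtype.ext congr($(hy.trans hx.symm).1)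
    rw [show x = ⟨R, hR⟩ from Subtype.ext hxR, hyN]
    exact hadj
  · have hxN : x = Set.inclusion Set.sdiff_subset N := Subtype.ext congr($(hx.trans hy.symm).1)
    rw [show y = ⟨R, hR⟩ from Subtype.ext hyR, hxN]
    exact hadj.symm
  · exact (hxy (Subtype.ext congr($(hx.trans hy.symm).1))).elim

theorem IsJoinTree.map_collapseOnto {T : SimpleGraph E} (hT : IsJoinTree E T) {R : Set V}
    (hR : R ∈ E) {N : ↥(E \ {R})} (hadj : T.Adj ⟨R, hR⟩ (Set.inclusion Set.sdiff_subset N))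
    (hRN : R ⊆ N) : IsJoinTree (E \ {R}) (T.map (collapseOnto R N)) := by
  obtain ⟨hac, hconn, hind⟩ := hT
  have hsurj : Surjective (collapseOnto R N) := fun K => ⟨_, collapseOnto_inclusion R N K⟩
  refine ⟨hac.map_of_isClique_fiber (isClique_collapseOnto_fiber hR hadj),
    hconn.map_of_surjective hsurj, fun v => ?_⟩
  have hmaps : Set.MapsTo (collapseOnto R N) {K | v ∈ (K : Set V)} {K | v ∈ (K : Set V)} :=
    fun K hK => subset_collapseOnto hRN K hK
  refine ((hind v).map_of_surjective ?_).mono (SimpleGraph.map_induce_restrict_le _ hmaps)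
  rintro ⟨K, hK⟩
  exact ⟨⟨Set.inclusion Set.sdiff_subset K, hK⟩, Subtype.ext (collapseOnto_inclusion R N K)⟩

end JoinTree

/-- If a hypergraph is α-acyclic and `R ⊆ S` are two distinct hyperedges,
then deleting the hyperedge `R` yields an α-acyclic hypergraph. -/
theorem alphaAcyclic_deleteSubedge (E : Set (Set V)) (R S : Set V)
    (hR : R ∈ E) (hS : S ∈ E) (hne : R ≠ S) (hsub : R ⊆ S)
    (h : AlphaAcyclic E) : AlphaAcyclic (E \ {R}) := by
  obtain ⟨T, hT⟩ := h
  have ⟨hac, hconn, hind⟩ := hT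
  obtain ⟨w⟩ := hconn ⟨R, hR⟩ ⟨S, hS⟩
  let p := w.toPath
  have hadj : T.Adj ⟨R, hR⟩ p.1.snd :=
    p.1.adj_snd (SimpleGraph.Walk.not_nil_of_ne fun hRS => hne congr($hRS.1))
  let N : ↥(E \ {R}) := ⟨p.1.snd, p.1.snd.2, fun hNR => hadj.ne (Subtype.ext hNR.symm)⟩
  have hRN : R ⊆ N := fun v hv =>
    hac.mem_of_mem_support_path (hind v) hv (hsub hv) p (p.1.getVert_mem_support 1)
  exact ⟨_, hT.map_collapseOnto hR hadj hRN⟩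
end

section
/- Let H = (V, E⁺, E⁻) be a signed-acyclic signed hypergraph with |V| = n, and let R = {u₁, ..., u_k} be any hyperedge in E⁻. Then H admits a signed-elimination sequence of the form (v₁, ..., v_{n−k}, u₁, ..., u_k), i.e., one ending with exactly the vertices of R. -/
variable {V : Type*}

/-- `Rx` is a pivot hyperedge witnessing that `x` is a signed-leaf of `(V, E⁺, E⁻)`:
`Rx` is a positive hyperedge containing `x`, every positive hyperedge containing `x`
is included in `Rx`, and `{N ∈ E⁻ | x ∈ N, N ⊄ Rx} ∪ {Rx}` is a chain under
inclusion with `Rx` as its minimal element. -/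
def IsPivot (Ep En : Set (Set V)) (x : V) (Rx : Set V) : Prop :=
  Rx ∈ Ep ∧ x ∈ Rx ∧ (∀ R ∈ Ep, x ∈ R → R ⊆ Rx) ∧
    IsChain (· ⊆ ·) ({N | N ∈ En ∧ x ∈ N ∧ ¬ N ⊆ Rx} ∪ {Rx}) ∧
    ∀ N ∈ ({N | N ∈ En ∧ x ∈ N ∧ ¬ N ⊆ Rx} ∪ {Rx} : Set (Set V)), Rx ⊆ N

/-- `x` is a signed-leaf of `(V, E⁺, E⁻)`. -/
def IsSignedLeaf (Ep En : Set (Set V)) (x : V) : Prop :=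
  ∃ Rx, IsPivot Ep En x Rx

/-- The set `S_x` of hyperedges (other than the pivot `Rx`) included in the pivot. -/
def leafSx (Ep En : Set (Set V)) (Rx : Set V) : Set (Set V) :=
  {K | K ∈ Ep ∪ En ∧ K ≠ Rx ∧ K ⊆ Rx}

/-- Positive hyperedges after removing the signed-leaf `x` with pivot `Rx`:
delete all hyperedges in `S_x`, then remove the vertex `x`. -/
def removeLeafPos (Ep En : Set (Set V)) (x : V) (Rx : Set V) : Set (Set V) :=
  removeVertex (Ep \ leafSx Ep En Rx) x

/-- Negative hyperedges after removing the signed-leaf `x` with pivot `Rx`. -/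
def removeLeafNeg (Ep En : Set (Set V)) (x : V) (Rx : Set V) : Set (Set V) :=
  removeVertex (En \ leafSx Ep En Rx) x

/-- A signed-elimination sequence: each listed vertex is a signed-leaf (with some
pivot) of the signed hypergraph obtained after eliminating the previous ones. -/
inductive ElimSeq : Set (Set V) → Set (Set V) → List V → Prop
  | nil (Ep En : Set (Set V)) : ElimSeq Ep En []
  | cons (Ep En : Set (Set V)) (x : V) (Rx : Set V) (l : List V)
      (hpivot : IsPivot Ep En x Rx)
      (htail : ElimSeq (removeLeafPos Ep En x Rx) (removeLeafNeg Ep En x Rx) l) :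
      ElimSeq Ep En (x :: l)


open SimpleGraph

namespace SElim

/-- Union of the sets in a list. -/
def sUL (l : List (Set V)) : Set V := {v | ∃ K ∈ l, v ∈ K}

@[simp] lemma sUL_nil : sUL ([] : List (Set V)) = ∅ := by
  ext v; simp only [sUL, List.not_mem_nil, false_and, exists_false, Set.mem_setOf_eq,
    Set.mem_empty_iff_false]

@[simp] lemma sUL_singleton (K : Set V) : sUL [K] = K := by
  ext v; simp [sUL]

@[simp] lemma sUL_append (l l' : List (Set V)) : sUL (l ++ l') = sUL l ∪ sUL l' := by
  ext v; simp [sUL, or_and_right, exists_or]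

lemma mem_sUL {l : List (Set V)} {K : Set V} (hK : K ∈ l) {v : V} (hv : v ∈ K) :
    v ∈ sUL l := ⟨K, hK, hv⟩

/-- Running-intersection property, processing the list from the left with
accumulator `prev` of already-placed hyperedges. -/
def IsRIPFrom : List (Set V) → List (Set V) → Prop
  | _, [] => True
  | prev, K :: rest =>
      (prev ≠ [] → ∃ J ∈ prev, K ∩ sUL prev ⊆ J) ∧ IsRIPFrom (prev ++ [K]) rest

@[simp] lemma isRIPFrom_nil (prev : List (Set V)) : IsRIPFrom prev [] := trivial

lemma isRIPFrom_cons {prev : List (Set V)} {K : Set V} {rest : List (Set V)} :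
    IsRIPFrom prev (K :: rest) ↔
      (prev ≠ [] → ∃ J ∈ prev, K ∩ sUL prev ⊆ J) ∧ IsRIPFrom (prev ++ [K]) rest :=
  Iff.rfl

/-- Appending a hyperedge at the end of an RIP list. -/
lemma rip_append : ∀ (l prev : List (Set V)) (K : Set V), IsRIPFrom prev l →
    (prev ++ l ≠ [] → ∃ J ∈ prev ++ l, K ∩ sUL (prev ++ l) ⊆ J) →
    IsRIPFrom prev (l ++ [K])
  | [], prev, K, _, hK => by
      rw [List.nil_append]
      refine ⟨fun h => ?_, trivial⟩
      simpa using hK (by simpa using h)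
  | K' :: rest, prev, K, h, hK => by
      refine ⟨h.1, rip_append rest (prev ++ [K']) K h.2 ?_⟩
      intro _
      have := hK (by simp)
      simpa [List.append_assoc] using this

lemma rip_append_subset {l : List (Set V)} {K J₀ : Set V} (h : IsRIPFrom [] l)
    (hJ : K = ∅ ∨ J₀ ∈ l ∧ K ⊆ J₀) : IsRIPFrom [] (l ++ [K]) := by
  refine rip_append l [] K h ?_
  intro hne
  rcases hJ with rfl | ⟨hJ₀, hsub⟩
  · obtain ⟨J, hJ⟩ := List.exists_mem_of_ne_nil _ (by simpa using hne)
    exact ⟨J, by simpa using hJ, by simp⟩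
  · exact ⟨J₀, by simpa using hJ₀, fun v hv => hsub hv.1⟩

/-- Intersecting every hyperedge with a fixed set preserves RIP. -/
lemma rip_map_inter (A : Set V) : ∀ (l prev : List (Set V)), IsRIPFrom prev l →
    IsRIPFrom (prev.map (· ∩ A)) (l.map (· ∩ A))
  | [], _, _ => trivial
  | K :: rest, prev, h => by
      have hU : sUL (prev.map (· ∩ A)) = sUL prev ∩ A := by
        ext v; constructor
        · rintro ⟨K', hK', hv⟩
          simp only [List.mem_map] at hK'
          obtain ⟨K'', hK'', rfl⟩ := hK'
          exact ⟨⟨K'', hK'', hv.1⟩, hv.2⟩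
        · rintro ⟨⟨K', hK', hv⟩, hA⟩
          exact ⟨K' ∩ A, List.mem_map.2 ⟨K', hK', rfl⟩, hv, hA⟩
      refine ⟨fun hne => ?_, ?_⟩
      · have hne' : prev ≠ [] := fun h' => hne (by simp [h'])
        obtain ⟨J, hJ, hJsub⟩ := h.1 hne'
        refine ⟨J ∩ A, List.mem_map.2 ⟨J, hJ, rfl⟩, ?_⟩
        rw [hU]
        rintro v ⟨⟨hvK, hvA⟩, hvU, _⟩
        exact ⟨hJsub ⟨hvK, hvU⟩, hvA⟩
      · have := rip_map_inter A rest (prev ++ [K]) h.2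
        simpa using this

open scoped Classical in
/-- Remove all occurrences of a given hyperedge from a list. -/
noncomputable def eraseSet (K₀ : Set V) : List (Set V) → List (Set V)
  | [] => []
  | K :: rest => if K = K₀ then eraseSet K₀ rest else K :: eraseSet K₀ rest

lemma mem_eraseSet {K₀ K : Set V} : ∀ {l : List (Set V)},
    K ∈ eraseSet K₀ l ↔ K ∈ l ∧ K ≠ K₀
  | [] => by simp [eraseSet]
  | K' :: rest => by
      by_cases hK' : K' = K₀
      · simp only [eraseSet, if_pos hK', mem_eraseSet (l := rest), List.mem_cons]
        constructor
        · rintro ⟨h1, h2⟩; exact ⟨Or.inr h1, h2⟩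
        · rintro ⟨h1 | h1, h2⟩
          · exact absurd (h1.trans hK') h2
          · exact ⟨h1, h2⟩
      · simp only [eraseSet, if_neg hK', List.mem_cons, mem_eraseSet (l := rest)]
        constructor
        · rintro (rfl | ⟨h1, h2⟩)
          · exact ⟨Or.inl rfl, hK'⟩
          · exact ⟨Or.inr h1, h2⟩
        · rintro ⟨rfl | h1, h2⟩
          · exact Or.inl rfl
          · exact Or.inr ⟨h1, h2⟩

lemma sUL_eraseSet_subset (K₀ : Set V) (l : List (Set V)) :
    sUL (eraseSet K₀ l) ⊆ sUL l := by
  rintro v ⟨K, hK, hv⟩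
  exact ⟨K, (mem_eraseSet.1 hK).1, hv⟩

lemma eraseSet_append (K₀ : Set V) (l l' : List (Set V)) :
    eraseSet K₀ (l ++ l') = eraseSet K₀ l ++ eraseSet K₀ l' := by
  induction l with
  | nil => simp [eraseSet]
  | cons K rest ih =>
      by_cases h : K = K₀ <;> simp [eraseSet, h, ih]

/-- Removing the empty hyperedge (or more generally adapting the accumulator)
preserves RIP. -/
lemma rip_erase_empty : ∀ (l prev prev' : List (Set V)), IsRIPFrom prev l →
    sUL prev' = sUL prev → (∀ J ∈ prev, J ≠ ∅ → J ∈ prev') →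
    IsRIPFrom prev' (eraseSet ∅ l)
  | [], _, _, _, _, _ => trivial
  | K :: rest, prev, prev', h, hU, hsub => by
      by_cases hK : K = ∅
      · rw [eraseSet, if_pos hK]
        refine rip_erase_empty rest (prev ++ [K]) prev' h.2 ?_ ?_
        · rw [hU]; subst hK; simp [sUL_append]
        · intro J hJ hJne
          rcases List.mem_append.1 hJ with h1 | h1
          · exact hsub J h1 hJne
          · simp only [List.mem_singleton] at h1
            exact absurd (h1.trans hK) hJne
      · rw [eraseSet, if_neg hK]
        refine ⟨fun hne => ?_, ?_⟩
        · rcases List.eq_nil_or_concat prev with rfl | _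
          · -- prev = [], so sUL prev' = ∅
            obtain ⟨J, hJ⟩ := List.exists_mem_of_ne_nil _ hne
            refine ⟨J, hJ, ?_⟩
            rw [hU]; simp
          · have hne' : prev ≠ [] := by
              rintro rfl
              simp_all
            obtain ⟨J, hJ, hJsub⟩ := h.1 hne'
            by_cases hJe : J = ∅
            · obtain ⟨J', hJ'⟩ := List.exists_mem_of_ne_nil _ hne
              refine ⟨J', hJ', ?_⟩
              rw [hU]
              intro v hv
              exact absurd (hJsub hv) (by simp [hJe])
            · exact ⟨J, hsub J hJ hJe, by rw [hU]; exact hJsub⟩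
        · refine rip_erase_empty rest (prev ++ [K]) (prev' ++ [K]) h.2 ?_ ?_
          · simp [sUL_append, hU]
          · intro J hJ hJne
            rcases List.mem_append.1 hJ with h1 | h1
            · exact List.mem_append.2 (Or.inl (hsub J h1 hJne))
            · exact List.mem_append.2 (Or.inr h1)

/-- Deleting a hyperedge included in another one that appears in the accumulator
preserves RIP. -/
lemma rip_erase_subsumed {K₀ K₁ : Set V} (hne : K₀ ≠ K₁) (hsub : K₀ ⊆ K₁) :
    ∀ (l prev : List (Set V)), IsRIPFrom prev l → K₁ ∈ prev →
    IsRIPFrom (eraseSet K₀ prev) (eraseSet K₀ l)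
  | [], _, _, _ => trivial
  | K :: rest, prev, h, hK₁ => by
      by_cases hK : K = K₀
      · rw [eraseSet, if_pos hK]
        have := rip_erase_subsumed hne hsub rest (prev ++ [K]) h.2 (by simp [hK₁])
        rwa [eraseSet_append, show eraseSet K₀ [K] = [] by simp [eraseSet, hK],
          List.append_nil] at this
      · rw [eraseSet, if_neg hK]
        refine ⟨fun _ => ?_, ?_⟩
        · have hne' : prev ≠ [] := by rintro rfl; simp at hK₁
          obtain ⟨J, hJ, hJsub⟩ := h.1 hne'
          have hK₁' : K₁ ∈ eraseSet K₀ prev := mem_eraseSet.2 ⟨hK₁, Ne.symm hne⟩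
          by_cases hJK₀ : J = K₀
          · refine ⟨K₁, hK₁', ?_⟩
            intro v hv
            have : v ∈ K ∩ sUL prev := ⟨hv.1, sUL_eraseSet_subset _ _ hv.2⟩
            exact hsub (hJK₀ ▸ hJsub this)
          · refine ⟨J, mem_eraseSet.2 ⟨hJ, hJK₀⟩, ?_⟩
            intro v hv
            exact hJsub ⟨hv.1, sUL_eraseSet_subset _ _ hv.2⟩
        · have := rip_erase_subsumed hne hsub rest (prev ++ [K]) h.2 (by simp [hK₁])
          rwa [eraseSet_append, show eraseSet K₀ [K] = [K] by simp [eraseSet, hK]] at this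

/-- Positional form of the RIP witness property. -/
lemma rip_get : ∀ (l prev : List (Set V)), IsRIPFrom prev l →
    ∀ i (h : i < l.length), (prev ≠ [] ∨ 0 < i) →
    ∃ J ∈ prev ++ l.take i, l[i] ∩ sUL (prev ++ l.take i) ⊆ J
  | [], _, _, i, h, _ => absurd h (by simp)
  | K :: rest, prev, hrip, 0, h, hor => by
      have hne : prev ≠ [] := by
        rcases hor with h1 | h1
        · exact h1
        · omega
      obtain ⟨J, hJ, hJsub⟩ := hrip.1 hne
      exact ⟨J, by simpa using hJ, by simpa using hJsub⟩
  | K :: rest, prev, hrip, i + 1, h, _ => by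
      have := rip_get rest (prev ++ [K]) hrip.2 i (by simpa using h) (Or.inl (by simp))
      simpa [List.append_assoc] using this

theorem alpha_of_rip {E : Set (Set V)} {l : List (Set V)}
    (hset : {K | K ∈ l} = E) (hrip : IsRIPFrom [] l) : AlphaAcyclic E := by
  classical
  have hmemE : ∀ K : ↥E, (K : Set V) ∈ l := by
    intro K
    have h2 : (K : Set V) ∈ {K | K ∈ l} := by rw [hset]; exact K.2
    exact h2
  have hmem : ∀ K : ↥E, ∃ i, ∃ h : i < l.length, l[i] = (K : Set V) :=
    fun K => List.mem_iff_getElem.1 (hmemE K)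
  set ι : ↥E → ℕ := fun K => Nat.find (hmem K) with hι
  have hspec : ∀ K : ↥E, ∃ h : ι K < l.length, l[ι K] = (K : Set V) :=
    fun K => Nat.find_spec (hmem K)
  have hmin : ∀ (K : ↥E) (j) (hj : j < l.length), l[j] = (K : Set V) → ι K ≤ j :=
    fun K j hj hjK => Nat.find_le ⟨hj, hjK⟩
  have hinj : ∀ K K' : ↥E, ι K = ι K' → K = K' := by
    intro K K' h
    obtain ⟨h1, e1⟩ := hspec K
    obtain ⟨h2, e2⟩ := hspec K'
    apply Subtype.ext
    rw [← e1, ← e2]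
    congr 1
  -- parent data
  have hpar0 : ∀ K : ↥E, ι K ≠ 0 → ∃ J : ↥E, ι J < ι K ∧
      (K : Set V) ∩ sUL (l.take (ι K)) ⊆ (J : Set V) := by
    intro K h0
    obtain ⟨hlt, hKeq⟩ := hspec K
    have hget := rip_get l [] hrip (ι K) hlt (Or.inr (Nat.pos_of_ne_zero h0))
    rw [List.nil_append] at hget
    obtain ⟨J, hJmem, hJsub⟩ := hget
    have hJl : J ∈ l := List.take_subset _ _ hJmem
    have hJE : J ∈ E := by rw [← hset]; exact hJl
    obtain ⟨j, hj, hjeq⟩ := List.mem_iff_getElem.1 hJmem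
    have hjlt : j < ι K := by
      have := hj
      rw [List.length_take] at this
      omega
    have hjl : j < l.length := by
      have := hj; rw [List.length_take] at this; omega
    refine ⟨⟨J, hJE⟩, ?_, ?_⟩
    · have hje : l[j] = J := by rw [← hjeq]; exact List.getElem_take.symm
      have : ι ⟨J, hJE⟩ ≤ j := hmin _ j hjl hje
      omega
    · rw [hKeq] at hJsub
      exact hJsub
  set par : ↥E → ↥E :=
    fun K => if h : ι K = 0 then K else Classical.choose (hpar0 K h) with hpardef
  have hpar1 : ∀ (K : ↥E) (h : ι K ≠ 0), ι (par K) < ι K := by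
    intro K h
    simp only [hpardef, dif_neg h]
    exact (Classical.choose_spec (hpar0 K h)).1
  have hpar2 : ∀ (K : ↥E) (h : ι K ≠ 0),
      (K : Set V) ∩ sUL (l.take (ι K)) ⊆ ((par K : ↥E) : Set V) := by
    intro K h
    simp only [hpardef, dif_neg h]
    exact (Classical.choose_spec (hpar0 K h)).2
  set G : SimpleGraph ↥E := SimpleGraph.fromRel (fun a b => par a = b) with hGdef
  have hAdj : ∀ a b : ↥E, G.Adj a b ↔ a ≠ b ∧ (par a = b ∨ par b = a) := by
    intro a b; simp [hGdef, fromRel_adj]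
  have hAdjPar : ∀ a b : ↥E, G.Adj a b → ι b < ι a → par a = b := by
    intro a b hab hlt
    rcases (hAdj a b).1 hab with ⟨hne, h | h⟩
    · exact h
    · exfalso
      by_cases h0 : ι b = 0
      · have hb : par b = b := by simp only [hpardef, dif_pos h0]
        rw [hb] at h
        exact hne h.symm
      · have := hpar1 b h0
        rw [h] at this
        omega
  have hadj_par : ∀ K : ↥E, ι K ≠ 0 → G.Adj K (par K) := by
    intro K h0
    refine (hAdj _ _).2 ⟨?_, Or.inl rfl⟩
    intro he
    have := hpar1 K h0
    rw [← he] at this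
    omega
  refine ⟨G, ?_, ?_, ?_⟩
  · -- acyclic
    intro v c hc
    obtain ⟨w, hwmem, hwmax⟩ := Finset.exists_max_image c.support.toFinset ι
      ⟨v, List.mem_toFinset.2 c.start_mem_support⟩
    have hwsup := List.mem_toFinset.1 hwmem
    have hc' : (c.rotate w hwsup).IsCycle := hc.rotate (u := w) hwsup
    have hsupp : ∀ u : ↥E, u ∈ (c.rotate w hwsup).support → ι u ≤ ι w := by
      intro u hu
      rcases List.mem_cons.1 ((c.rotate w hwsup).support_eq_cons ▸ hu) with rfl | hu'
      · exact le_rfl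
      · have := (Walk.support_rotate c w hwsup).mem_iff.1 hu'
        have hu2 : u ∈ c.support := c.support_eq_cons ▸ List.mem_cons_of_mem _ this
        exact hwmax u (List.mem_toFinset.2 hu2)
    obtain ⟨b, hadj, q, hqeq⟩ := Walk.not_nil_iff.1 hc'.not_nil
    rw [hqeq] at hc'
    have hq := (Walk.cons_isCycle_iff q hadj).1 hc'
    have hqlen : 2 ≤ q.length := by
      have := hc'.three_le_length
      simp only [Walk.length_cons] at this
      omega
    have hqrev : ¬ q.reverse.Nil := by
      rw [Walk.nil_iff_length_eq]
      rw [Walk.length_reverse]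
      omega
    obtain ⟨b₂, hadj₂, q₂, hq₂eq⟩ := Walk.not_nil_iff.1 hqrev
    have hb₂supp : b₂ ∈ q.support := by
      have : b₂ ∈ q.reverse.support := by
        rw [hq₂eq, Walk.support_cons]
        exact List.mem_cons_of_mem _ q₂.start_mem_support
      rwa [Walk.support_reverse, List.mem_reverse] at this
    have hedge₂ : s(w, b₂) ∈ q.edges := by
      have : s(w, b₂) ∈ q.reverse.edges := by
        rw [hq₂eq, Walk.edges_cons]
        exact List.mem_cons_self
      rwa [Walk.edges_reverse, List.mem_reverse] at this
    have hbb₂ : b ≠ b₂ := by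
      rintro rfl
      exact hq.2 hedge₂
    have hbw : b ≠ w := hadj.ne'
    have hb₂w : b₂ ≠ w := hadj₂.ne'
    have hbsup : ι b < ι w := by
      have : b ∈ (Walk.cons hadj q).support := by
        rw [Walk.support_cons]
        exact List.mem_cons_of_mem _ q.start_mem_support
      have h1 := hsupp b (hqeq ▸ this)
      have h2 : ι b ≠ ι w := fun h => hbw (hinj _ _ h)
      omega
    have hb₂sup : ι b₂ < ι w := by
      have : b₂ ∈ (Walk.cons hadj q).support := by
        rw [Walk.support_cons]
        exact List.mem_cons_of_mem _ hb₂supp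
      have h1 := hsupp b₂ (hqeq ▸ this)
      have h2 : ι b₂ ≠ ι w := fun h => hb₂w (hinj _ _ h)
      omega
    have e1 : par w = b := hAdjPar w b hadj hbsup
    have e2 : par w = b₂ := hAdjPar w b₂ hadj₂ hb₂sup
    exact hbb₂ (e1 ▸ e2)
  · -- preconnected
    intro a b
    have hl : l ≠ [] := by
      have := hmemE a
      rintro rfl
      simp at this
    have hlpos : 0 < l.length := List.length_pos_iff.2 hl
    have hrootE : l[0] ∈ E := by rw [← hset]; exact List.getElem_mem hlpos
    set root : ↥E := ⟨l[0], hrootE⟩ with hrootdef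
    have hroot : ι root = 0 := Nat.le_zero.1 (hmin root 0 hlpos rfl)
    have claim : ∀ n (K : ↥E), ι K ≤ n → G.Reachable K root := by
      intro n
      induction n with
      | zero =>
          intro K hK
          have : K = root := hinj _ _ (by omega)
          rw [this]
      | succ n ih =>
          intro K hK
          by_cases h0 : ι K = 0
          · have : K = root := hinj _ _ (by omega)
            rw [this]
          · exact ((hadj_par K h0).reachable).trans
              (ih (par K) (by have := hpar1 K h0; omega))
    exact (claim _ a le_rfl).trans (claim _ b le_rfl).symm
  · -- vertex sets
    intro v a b
    have hva : v ∈ ((a : ↥E) : Set V) := a.2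
    have hex : ∃ i, ∃ h : i < l.length, v ∈ l[i] := by
      obtain ⟨i, h, heq⟩ := List.mem_iff_getElem.1 (hmemE (a : ↥E))
      exact ⟨i, h, heq ▸ hva⟩
    set m : ℕ := Nat.find hex with hmdef
    obtain ⟨hmlt, hmv⟩ := Nat.find_spec hex
    have hmmin : ∀ j (hj : j < l.length), v ∈ l[j] → m ≤ j :=
      fun j hj hjv => Nat.find_le ⟨hj, hjv⟩
    have hfvE : l[m] ∈ E := by rw [← hset]; exact List.getElem_mem hmlt
    set fvE : ↥E := ⟨l[m], hfvE⟩ with hfvdef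
    have hfv : fvE ∈ {K : ↥E | v ∈ (K : Set V)} := hmv
    have claim2 : ∀ n (K : {K : ↥E | v ∈ (K : Set V)}),
        ι (K : ↥E) ≤ n →
        (G.induce {K : ↥E | v ∈ (K : Set V)}).Reachable K ⟨fvE, hfv⟩ := by
      intro n
      induction n with
      | zero =>
          intro K hK
          have h0 : ι (K : ↥E) = 0 := Nat.le_zero.1 hK
          have hmle : m ≤ ι (K : ↥E) := by
            obtain ⟨h1, e1⟩ := hspec (K : ↥E)
            exact hmmin _ h1 (by rw [e1]; exact K.2)
          have hfvι : ι fvE ≤ m := hmin _ m hmlt rfl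
          have hKfv : (K : ↥E) = fvE := hinj _ _ (by omega)
          have hKeq : K = ⟨fvE, hfv⟩ := by apply Subtype.ext; exact hKfv
          rw [hKeq]
      | succ n ih =>
          intro K hK
          by_cases hKfv : (K : ↥E) = fvE
          · have hKeq : K = ⟨fvE, hfv⟩ := by apply Subtype.ext; exact hKfv
            rw [hKeq]
          · have hmle : m ≤ ι (K : ↥E) := by
              obtain ⟨h1, e1⟩ := hspec (K : ↥E)
              exact hmmin _ h1 (by rw [e1]; exact K.2)
            have hmne : m ≠ ι (K : ↥E) := by
              intro he
              apply hKfv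
              obtain ⟨h1, e1⟩ := hspec (K : ↥E)
              apply Subtype.ext
              have hge : l[ι (K : ↥E)]'h1 = l[m]'hmlt := by
                congr 1
                omega
              rw [← e1, hge]
            have h0 : ι (K : ↥E) ≠ 0 := by omega
            have hmtake : l[m] ∈ l.take (ι (K : ↥E)) := by
              have hlen : m < (l.take (ι (K : ↥E))).length := by
                rw [List.length_take]
                obtain ⟨h1, _⟩ := hspec (K : ↥E)
                omega
              have hgt : (l.take (ι (K : ↥E)))[m] = l[m] := List.getElem_take
              rw [← hgt]
              exact List.getElem_mem hlen
            have hvJ : v ∈ ((par (K : ↥E) : ↥E) : Set V) :=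
              hpar2 _ h0 ⟨K.2, mem_sUL hmtake hmv⟩
            have hadjKJ : G.Adj (K : ↥E) (par (K : ↥E)) := hadj_par _ h0
            have hadjInd : (G.induce {K : ↥E | v ∈ (K : Set V)}).Adj K
                ⟨par (K : ↥E), hvJ⟩ := hadjKJ
            refine hadjInd.reachable.trans (ih ⟨par (K : ↥E), hvJ⟩ ?_)
            show ι (par (K : ↥E)) ≤ n
            have := hpar1 (K : ↥E) h0
            omega
    exact (claim2 _ a le_rfl).trans (claim2 _ b le_rfl).symm
section Graph

variable {α : Type*} {G : SimpleGraph α}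

/-- Endpoint-adjacent vertex at the end of a nontrivial walk. -/
lemma exists_penult {u y : α} (p : G.Walk u y) (hne : u ≠ y) :
    ∃ u₃, G.Adj y u₃ ∧ u₃ ∈ p.support := by
  have hrev : ¬ p.reverse.Nil := Walk.not_nil_of_ne (Ne.symm hne)
  obtain ⟨u₃, hadj, q, he⟩ := Walk.not_nil_iff.1 hrev
  refine ⟨u₃, hadj, ?_⟩
  have : u₃ ∈ p.reverse.support := by
    rw [he, Walk.support_cons]
    exact List.mem_cons_of_mem _ q.start_mem_support
  rwa [Walk.support_reverse, List.mem_reverse] at this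

/-- A path avoiding a vertex `y` with a unique neighbour, given the endpoints differ
from `y`. -/
lemma not_mem_support_of_unique_nbr {y z : α} (hz : ∀ m, G.Adj y m → m = z)
    {u w : α} (p : G.Walk u w) (hp : p.IsPath) (hu : u ≠ y) (hw : w ≠ y) :
    y ∉ p.support := by
  classical
  intro hy
  have hspec := p.take_spec hy
  have hp₁ : (p.takeUntil y hy).IsPath := hp.takeUntil hy
  have hp₂ : (p.dropUntil y hy).IsPath := hp.dropUntil hy
  obtain ⟨u₁, hadj₁, hu₁supp⟩ := exists_penult (p.takeUntil y hy) hu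
  have hu₁z : u₁ = z := hz u₁ hadj₁
  obtain ⟨u₂, hadj₂, q₂, he₂⟩ := Walk.not_nil_iff.1
    (Walk.not_nil_of_ne (show y ≠ w from Ne.symm hw) : ¬ (p.dropUntil y hy).Nil)
  have hu₂z : u₂ = z := hz u₂ hadj₂
  have hu₂tail : u₂ ∈ (p.dropUntil y hy).support.tail := by
    rw [he₂, Walk.support_cons]
    exact q₂.start_mem_support
  have hnd := hp.support_nodup
  rw [← hspec, Walk.support_append] at hnd
  have hdisj := List.disjoint_of_nodup_append hnd
  exact hdisj (hu₁z ▸ hu₁supp) (hu₂z ▸ hu₂tail)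

/-- Every finite tree with at least two vertices has a leaf different from any
prescribed vertex. -/
lemma exists_leaf [Fintype α] (hac : G.IsAcyclic) (hconn : G.Preconnected)
    (r s : α) (hrs : r ≠ s) :
    ∃ y z, y ≠ r ∧ G.Adj y z ∧ ∀ m, G.Adj y m → m = z := by
  classical
  set P : ℕ → Prop := fun n => ∃ (b : α) (p : G.Walk r b), p.IsPath ∧ p.length = n
    with hPdef
  have hP0 : P 0 := ⟨r, Walk.nil, by simp, rfl⟩
  have hPbound : ∀ n, P n → n < Fintype.card α := by
    rintro n ⟨b, p, hp, rfl⟩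
    exact hp.length_lt
  set n₀ := Nat.findGreatest P (Fintype.card α) with hn₀def
  have hn₀ : P n₀ := Nat.findGreatest_spec (Nat.zero_le _) hP0
  have hmax : ∀ m, P m → m ≤ n₀ :=
    fun m hm => Nat.le_findGreatest (le_of_lt (hPbound m hm)) hm
  obtain ⟨y, p, hp, hplen⟩ := hn₀
  have hn₀pos : 1 ≤ n₀ := by
    obtain ⟨q⟩ := hconn r s
    have hq1 : 1 ≤ q.toPath.val.length := by
      rcases Nat.eq_zero_or_pos q.toPath.val.length with h0 | h0
      · exact absurd (Walk.eq_of_length_eq_zero h0) hrs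
      · omega
    exact le_trans hq1 (hmax _ ⟨s, q.toPath.val, q.toPath.property, rfl⟩)
  have hyr : y ≠ r := by
    rintro rfl
    rw [Walk.isPath_iff_eq_nil] at hp
    rw [hp] at hplen
    simp at hplen
    omega
  have hrev : ¬ p.reverse.Nil := Walk.not_nil_of_ne hyr
  obtain ⟨z, hadj, q, he⟩ := Walk.not_nil_iff.1 hrev
  refine ⟨y, z, hyr, hadj, ?_⟩
  intro m hm
  by_contra hmz
  have hprev : p.reverse.IsPath := hp.reverse
  rw [he] at hprev
  have hqpath := (Walk.cons_isPath_iff _ _).1 hprev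
  by_cases hms : m ∈ p.support
  · -- a cycle arises, contradiction
    have hmy : m ≠ y := fun h => hm.ne h.symm
    have hmq : m ∈ q.support := by
      have h1 : m ∈ p.reverse.support := by
        rwa [Walk.support_reverse, List.mem_reverse]
      rw [he, Walk.support_cons] at h1
      rcases List.mem_cons.1 h1 with h2 | h2
      · exact absurd h2 hmy
      · exact h2
    have hq1 : (q.takeUntil m hmq).IsPath := hqpath.1.takeUntil hmq
    have hyq1 : y ∉ (q.takeUntil m hmq).support :=
      fun h => hqpath.2 (Walk.support_takeUntil_subset _ hmq h)
    have hP1 : (Walk.cons hadj (q.takeUntil m hmq)).IsPath :=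
      (Walk.cons_isPath_iff _ _).2 ⟨hq1, hyq1⟩
    have hcyc : (Walk.cons hm.symm (Walk.cons hadj (q.takeUntil m hmq))).IsCycle := by
      apply (Walk.cons_isCycle_iff _ _).2
      refine ⟨hP1, ?_⟩
      rw [Walk.edges_cons]
      intro h1
      rcases List.mem_cons.1 h1 with h2 | h2
      · rw [Sym2.eq_iff] at h2
        rcases h2 with ⟨h3, _⟩ | ⟨h3, _⟩
        · exact hmy h3
        · exact hmz h3
      · have h3 := Walk.edges_takeUntil_subset _ hmq h2
        exact hqpath.2 (Walk.snd_mem_support_of_mem_edges _ h3)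
    exact hac _ hcyc
  · -- the path can be extended, contradicting maximality
    have hext : (p.concat hm).IsPath := by
      rw [← Walk.isPath_reverse_iff, Walk.reverse_concat]
      apply (Walk.cons_isPath_iff _ _).2
      refine ⟨hp.reverse, ?_⟩
      rwa [Walk.support_reverse, List.mem_reverse]
    have := hmax (n₀ + 1) ⟨m, p.concat hm, hext, by rw [Walk.length_concat]; omega⟩
    omega

/-- Transfer a walk in an induced subgraph to the ambient graph, keeping track of
supports. -/
lemma walk_of_induce {s : Set α} : ∀ {a b : ↥s} (p : (G.induce s).Walk a b),
    ∃ q : G.Walk ↑a ↑b, ∀ z ∈ q.support, z ∈ s := by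
  intro a b p
  induction p with
  | nil =>
      refine ⟨Walk.nil, ?_⟩
      intro z hz
      rw [Walk.support_nil, List.mem_singleton] at hz
      exact hz ▸ Subtype.prop _
  | @cons a c b h q ih =>
      obtain ⟨q', hq'⟩ := ih
      refine ⟨Walk.cons h q', ?_⟩
      intro z hz
      change z ∈ (a : α) :: q'.support at hz
      rcases List.mem_cons.1 hz with rfl | hz'
      · exact Subtype.prop _
      · exact hq' z hz'

end Graph

theorem rip_of_joinTree : ∀ (n : ℕ) (E : Set (Set V)) (T : SimpleGraph ↥E),
    IsJoinTree E T → ∀ r : Set V, r ∈ E → E.ncard ≤ n → E.Finite →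
    ∃ tail : List (Set V), {K | K ∈ r :: tail} = E ∧ IsRIPFrom [] (r :: tail) := by
  intro n
  induction n with
  | zero =>
      intro E T hT r hr hcard hfin
      have hE : E = ∅ := (Set.ncard_eq_zero hfin).1 (Nat.le_zero.1 hcard)
      rw [hE] at hr
      exact absurd hr (Set.notMem_empty r)
  | succ n ih =>
      intro E T hT r hr hcard hfin
      classical
      haveI := hfin.fintype
      by_cases hsing : E = {r}
      · refine ⟨[], ?_, ?_⟩
        · rw [hsing]; ext K; simp
        · exact ⟨fun h => absurd rfl h, trivial⟩
      · have hex : ∃ s ∈ E, s ≠ r := by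
          by_contra h
          push_neg at h
          apply hsing
          ext K
          constructor
          · intro hK; exact h K hK
          · rintro rfl; exact hr
        obtain ⟨s, hsE, hsr⟩ := hex
        obtain ⟨hac, hconn, hvs⟩ := hT
        have hrsne : (⟨r, hr⟩ : ↥E) ≠ ⟨s, hsE⟩ := by
          intro h
          exact hsr (congrArg Subtype.val h).symm
        obtain ⟨y, z, hyr, hyz, huniq⟩ := exists_leaf hac hconn ⟨r, hr⟩ ⟨s, hsE⟩ hrsne
        set E' : Set (Set V) := E \ {(y : Set V)} with hE'def
        have hyE : (y : Set V) ∈ E := y.2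
        have hvalne : ∀ t : ↥E, t ≠ y → (t : Set V) ≠ (y : Set V) :=
          fun t ht h => ht (Subtype.ext h)
        have hrE' : r ∈ E' := by
          refine ⟨hr, ?_⟩
          intro h
          apply hyr
          apply Subtype.ext
          exact (Set.mem_singleton_iff.1 h).symm
        set f : ↥E' → ↥E := fun a => ⟨a.1, a.2.1⟩ with hfdef
        have hfinj : Function.Injective f := by
          intro a b h
          apply Subtype.ext
          have : (f a).val = (f b).val := congrArg Subtype.val h
          exact this
        have hfne : ∀ a : ↥E', f a ≠ y := by
          intro a h
          exact a.2.2 (congrArg Subtype.val h)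
        set T' : SimpleGraph ↥E' := T.comap f with hT'def
        have hg : ∀ {a b : ↥E'}, T'.Adj a b → T.Adj (f a) (f b) := fun h => h
        let g : T' →g T := ⟨f, fun {a b} h => h⟩
        -- lift a T-walk avoiding y to a T'-walk
        have lift0 : ∀ {u w : ↥E} (p : T.Walk u w), (∀ t ∈ p.support, t ≠ y) →
            ∀ (hu' : (u : Set V) ∈ E') (hw' : (w : Set V) ∈ E'),
            T'.Reachable ⟨↑u, hu'⟩ ⟨↑w, hw'⟩ := by
          intro u w p
          induction p with
          | nil =>
              intro _ hu' hw'
              exact Reachable.refl _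
          | @cons u c w h q ih2 =>
              intro hsupp hu' hw'
              have hcy : c ≠ y := hsupp c (by
                rw [Walk.support_cons]
                exact List.mem_cons_of_mem _ q.start_mem_support)
              have hc' : (c : Set V) ∈ E' := ⟨c.2, hvalne c hcy⟩
              have hadj' : T'.Adj ⟨↑u, hu'⟩ ⟨↑c, hc'⟩ := by
                show T.Adj (f ⟨↑u, hu'⟩) (f ⟨↑c, hc'⟩)
                exact h
              refine hadj'.reachable.trans (ih2 ?_ hc' hw')
              intro t ht
              apply hsupp t
              rw [Walk.support_cons]
              exact List.mem_cons_of_mem _ ht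
        -- T' is a join tree of E'
        have hac' : T'.IsAcyclic := by
          rw [isAcyclic_iff_path_unique]
          intro a b p q
          have heq := (isAcyclic_iff_path_unique.1 hac)
            ⟨p.val.map g, Walk.map_isPath_of_injective hfinj p.property⟩
            ⟨q.val.map g, Walk.map_isPath_of_injective hfinj q.property⟩
          have heq' : p.val.map g = q.val.map g := congrArg Subtype.val heq
          exact Subtype.ext (Walk.map_injective_of_injective hfinj _ _ heq')
        have hconn' : T'.Preconnected := by
          intro a b
          obtain ⟨w⟩ := hconn (f a) (f b)
          have hp := w.toPath
          have hyp : y ∉ hp.val.support :=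
            not_mem_support_of_unique_nbr huniq hp.val hp.property
              (hfne a) (hfne b)
          have := lift0 hp.val (fun t ht h => hyp (h ▸ ht)) a.2 b.2
          have ha : (⟨↑(f a), a.2⟩ : ↥E') = a := Subtype.ext rfl
          have hb : (⟨↑(f b), b.2⟩ : ↥E') = b := Subtype.ext rfl
          rwa [ha, hb] at this
        have hvs' : ∀ v : V,
            (T'.induce {K : ↥E' | v ∈ (K : Set V)}).Preconnected := by
          intro v
          -- lift with v-membership
          have lift : ∀ {u w : ↥E} (p : T.Walk u w), (∀ t ∈ p.support, t ≠ y) →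
              (∀ t ∈ p.support, v ∈ (t : Set V)) →
              ∀ (hu' : (u : Set V) ∈ E') (hw' : (w : Set V) ∈ E')
                (hu2 : v ∈ (u : Set V)) (hw2 : v ∈ (w : Set V)),
              (T'.induce {K : ↥E' | v ∈ (K : Set V)}).Reachable
                ⟨⟨↑u, hu'⟩, hu2⟩ ⟨⟨↑w, hw'⟩, hw2⟩ := by
            intro u w p
            induction p with
            | nil =>
                intro _ _ hu' hw' hu2 hw2
                exact Reachable.refl _
            | @cons u c w h q ih2 =>
                intro hysupp hvsupp hu' hw' hu2 hw2
                have hcsupp : c ∈ (Walk.cons h q).support := by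
                  rw [Walk.support_cons]
                  exact List.mem_cons_of_mem _ q.start_mem_support
                have hcy : c ≠ y := hysupp c hcsupp
                have hc' : (c : Set V) ∈ E' := ⟨c.2, hvalne c hcy⟩
                have hc2 : v ∈ (c : Set V) := hvsupp c hcsupp
                have hadj' : (T'.induce {K : ↥E' | v ∈ (K : Set V)}).Adj
                    ⟨⟨↑u, hu'⟩, hu2⟩ ⟨⟨↑c, hc'⟩, hc2⟩ := by
                  show T.Adj (f ⟨↑u, hu'⟩) (f ⟨↑c, hc'⟩)
                  exact h
                refine hadj'.reachable.trans (ih2 ?_ ?_ hc' hw' hc2 hw2)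
                · intro t ht
                  apply hysupp t
                  rw [Walk.support_cons]
                  exact List.mem_cons_of_mem _ ht
                · intro t ht
                  apply hvsupp t
                  rw [Walk.support_cons]
                  exact List.mem_cons_of_mem _ ht
          intro a b
          obtain ⟨w0⟩ := hvs v ⟨f a.1, a.2⟩ ⟨f b.1, b.2⟩
          obtain ⟨q, hq⟩ := walk_of_induce w0
          have hqb : q.bypass.IsPath := Walk.bypass_isPath q
          have hqbs : ∀ t ∈ q.bypass.support, v ∈ (t : Set V) :=
            fun t ht => hq t (Walk.support_bypass_subset _ ht)
          have hyq : y ∉ q.bypass.support :=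
            not_mem_support_of_unique_nbr huniq q.bypass hqb
              (hfne a.1) (hfne b.1)
          have := lift q.bypass (fun t ht h => hyq (h ▸ ht)) hqbs
            a.1.2 b.1.2 a.2 b.2
          have ha : (⟨⟨↑(f a.1), a.1.2⟩, a.2⟩ :
              {K : ↥E' | v ∈ (K : Set V)}) = a := Subtype.ext (Subtype.ext rfl)
          have hb : (⟨⟨↑(f b.1), b.1.2⟩, b.2⟩ :
              {K : ↥E' | v ∈ (K : Set V)}) = b := Subtype.ext (Subtype.ext rfl)
          rwa [ha, hb] at this
        -- apply induction hypothesis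
        have hcard' : E'.ncard ≤ n := by
          rw [hE'def]
          have := Set.ncard_diff_singleton_lt_of_mem hyE hfin
          omega
        obtain ⟨tail', hset', hrip'⟩ := ih E' T' ⟨hac', hconn', hvs'⟩ r hrE'
          hcard' (hfin.diff)
        refine ⟨tail' ++ [(y : Set V)], ?_, ?_⟩
        · ext K
          constructor
          · intro hK
            have hK' : K ∈ r :: (tail' ++ [(y : Set V)]) := hK
            rcases List.mem_cons.1 hK' with rfl | hK2
            · exact hr
            · rcases List.mem_append.1 hK2 with h | h
              · have : K ∈ {K | K ∈ r :: tail'} := List.mem_cons_of_mem _ h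
                rw [hset'] at this
                exact this.1
              · rw [List.mem_singleton] at h
                exact h ▸ hyE
          · intro hK
            show K ∈ r :: (tail' ++ [(y : Set V)])
            by_cases hKy : K = (y : Set V)
            · exact List.mem_cons_of_mem _ (List.mem_append.2 (Or.inr (by
                rw [hKy]; exact List.mem_singleton_self _)))
            · have : K ∈ {K | K ∈ r :: tail'} := by
                rw [hset']
                exact ⟨hK, hKy⟩
              rcases List.mem_cons.1 this with h | h
              · exact h ▸ List.mem_cons_self
              · exact List.mem_cons_of_mem _ (List.mem_append.2 (Or.inl h))
        · have key : IsRIPFrom [] ((r :: tail') ++ [(y : Set V)]) := by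
            apply rip_append _ _ _ hrip'
            intro _
            have hzE' : (z : Set V) ∈ E' := ⟨z.2, hvalne z (fun h => hyz.ne h.symm)⟩
            have hzmem : (z : Set V) ∈ r :: tail' := by
              have : (z : Set V) ∈ {K | K ∈ r :: tail'} := by rw [hset']; exact hzE'
              exact this
            refine ⟨(z : Set V), by simpa using hzmem, ?_⟩
            rintro v ⟨hvy, hvU⟩
            rw [List.nil_append] at hvU
            obtain ⟨K', hK'mem, hvK'⟩ := hvU
            have hK'E' : K' ∈ E' := by
              have : K' ∈ {K | K ∈ r :: tail'} := hK'mem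
              rwa [hset'] at this
            -- use v-connectivity between K' and y
            have hK'E : K' ∈ E := hK'E'.1
            obtain ⟨w0⟩ := hvs v ⟨⟨K', hK'E⟩, hvK'⟩ ⟨y, hvy⟩
            obtain ⟨q, hq⟩ := walk_of_induce w0
            have hqb : q.bypass.IsPath := Walk.bypass_isPath q
            have hne : (⟨K', hK'E⟩ : ↥E) ≠ y := fun h =>
              hK'E'.2 (congrArg Subtype.val h)
            obtain ⟨u₃, hadj₃, hu₃supp⟩ := exists_penult q.bypass hne
            have hu₃z : u₃ = z := huniq u₃ hadj₃
            have hvu₃ : v ∈ (u₃ : Set V) :=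
              hq u₃ (Walk.support_bypass_subset _ hu₃supp)
            rw [hu₃z] at hvu₃
            exact hvu₃
          simpa using key

/-- Rooted RIP list from α-acyclicity. -/
theorem rip_of_alpha {E : Set (Set V)} (hE : AlphaAcyclic E) (hfin : E.Finite)
    {r : Set V} (hr : r ∈ E) :
    ∃ tail : List (Set V), {K | K ∈ r :: tail} = E ∧ IsRIPFrom [] (r :: tail) := by
  obtain ⟨T, hT⟩ := hE
  exact rip_of_joinTree E.ncard E T hT r hr le_rfl hfin

/-- Hyperedge collections obtained by intersecting with a fixed set. -/
def interSet (A : Set V) (E : Set (Set V)) : Set (Set V) :=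
  {K' | ∃ K ∈ E, K' = K ∩ A ∧ K' ≠ ∅}

lemma removeVertex_eq_interSet (E : Set (Set V)) (x : V) :
    removeVertex E x = interSet {x}ᶜ E := by
  unfold removeVertex interSet
  ext K'
  simp only [Set.mem_setOf_eq, Set.diff_eq]

lemma alpha_empty : AlphaAcyclic (∅ : Set (Set V)) :=
  alpha_of_rip (l := []) (by ext K; simp) trivial

/-- Attaching a hyperedge that is empty or included in an existing one. -/
lemma alpha_attach {E : Set (Set V)} (hE : AlphaAcyclic E) (hfin : E.Finite)
    {K : Set V} (h : K = ∅ ∨ ∃ J ∈ E, K ⊆ J) : AlphaAcyclic (E ∪ {K}) := by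
  classical
  rcases Set.eq_empty_or_nonempty E with rfl | ⟨r, hr⟩
  · have hK : K = ∅ := by
      rcases h with h | ⟨J, hJ, _⟩
      · exact h
      · exact absurd hJ (Set.notMem_empty J)
    apply alpha_of_rip (l := [K])
    · ext X; simp
    · exact ⟨fun h => absurd rfl h, trivial⟩
  · obtain ⟨tail, hset, hrip⟩ := rip_of_alpha hE hfin hr
    have hrip2 : IsRIPFrom [] ((r :: tail) ++ [K]) := by
      rcases h with h | ⟨J, hJ, hsub⟩
      · exact rip_append_subset (J₀ := ∅) hrip (Or.inl h)
      · refine rip_append_subset (J₀ := J) hrip (Or.inr ⟨?_, hsub⟩)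
        have : J ∈ {X | X ∈ r :: tail} := by rw [hset]; exact hJ
        exact this
    apply alpha_of_rip (l := (r :: tail) ++ [K]) _ hrip2
    ext X
    constructor
    · intro hX
      rcases List.mem_append.1 hX with h1 | h1
      · have : X ∈ {X | X ∈ r :: tail} := h1
        rw [hset] at this
        exact Or.inl this
      · rw [List.mem_singleton] at h1
        exact Or.inr h1
    · intro hX
      rcases hX with h1 | h1
      · have : X ∈ r :: tail := by
          have h2 : X ∈ {X | X ∈ r :: tail} := by rw [hset]; exact h1
          exact h2
        exact List.mem_append.2 (Or.inl this)
      · exact List.mem_append.2 (Or.inr (by simpa using h1))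

/-- Deleting a hyperedge included in another (different) one. -/
lemma alpha_erase {E : Set (Set V)} (hE : AlphaAcyclic E) (hfin : E.Finite)
    {K₀ K₁ : Set V} (hK₁ : K₁ ∈ E) (hne : K₀ ≠ K₁) (hsub : K₀ ⊆ K₁) :
    AlphaAcyclic (E \ {K₀}) := by
  classical
  obtain ⟨tail, hset, hrip⟩ := rip_of_alpha hE hfin hK₁
  have h2 : IsRIPFrom [K₁] tail := hrip.2
  have h3 := rip_erase_subsumed hne hsub tail [K₁] h2 (List.mem_singleton_self _)
  have h4 : eraseSet K₀ [K₁] = [K₁] := by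
    unfold eraseSet
    rw [if_neg (Ne.symm hne)]
    rfl
  rw [h4] at h3
  apply alpha_of_rip (l := K₁ :: eraseSet K₀ tail)
  · ext X
    constructor
    · intro hX
      rcases List.mem_cons.1 hX with rfl | hX2
      · exact ⟨hK₁, Ne.symm hne⟩
      · rw [mem_eraseSet] at hX2
        refine ⟨?_, hX2.2⟩
        have : X ∈ {X | X ∈ K₁ :: tail} := List.mem_cons_of_mem _ hX2.1
        rw [hset] at this
        exact this
    · rintro ⟨hX1, hX2⟩
      have : X ∈ K₁ :: tail := by
        have h5 : X ∈ {X | X ∈ K₁ :: tail} := by rw [hset]; exact hX1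
        exact h5
      rcases List.mem_cons.1 this with rfl | h6
      · exact List.mem_cons_self
      · exact List.mem_cons_of_mem _ (mem_eraseSet.2 ⟨h6, hX2⟩)
  · exact ⟨fun h => absurd rfl h, h3⟩

/-- α-acyclicity is preserved by intersecting all hyperedges with a fixed set. -/
lemma alpha_interSet {E : Set (Set V)} (A : Set V) (hE : AlphaAcyclic E)
    (hfin : E.Finite) : AlphaAcyclic (interSet A E) := by
  classical
  rcases Set.eq_empty_or_nonempty E with rfl | ⟨r, hr⟩
  · have : interSet A ∅ = (∅ : Set (Set V)) := by
      ext X; simp [interSet]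
    rw [this]
    exact alpha_empty
  · obtain ⟨tail, hset, hrip⟩ := rip_of_alpha hE hfin hr
    set l := r :: tail with hldef
    have h1 : IsRIPFrom [] (l.map (· ∩ A)) := by
      have := rip_map_inter A l [] hrip
      simpa using this
    have h2 : IsRIPFrom [] (eraseSet ∅ (l.map (· ∩ A))) := by
      apply rip_erase_empty (l.map (· ∩ A)) [] [] h1 rfl
      intro J hJ
      simp at hJ
    apply alpha_of_rip _ h2
    ext X
    constructor
    · intro hX
      have hX' : X ∈ eraseSet ∅ (l.map (· ∩ A)) := hX
      rw [mem_eraseSet] at hX'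
      obtain ⟨hX1, hX2⟩ := hX'
      rw [List.mem_map] at hX1
      obtain ⟨K, hK, rfl⟩ := hX1
      refine ⟨K, ?_, rfl, hX2⟩
      have : K ∈ {X | X ∈ l} := hK
      rw [hset] at this
      exact this
    · rintro ⟨K, hK, rfl, hne⟩
      show K ∩ A ∈ eraseSet ∅ (l.map (· ∩ A))
      rw [mem_eraseSet]
      refine ⟨List.mem_map.2 ⟨K, ?_, rfl⟩, hne⟩
      have : K ∈ {X | X ∈ l} := by rw [hset]; exact hK
      exact this

lemma signed_mono {Ep En En' : Set (Set V)} (h : SignedAcyclic Ep En)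
    (hsub : En' ⊆ En) : SignedAcyclic Ep En' :=
  fun S hS => h S (hS.trans hsub)

lemma signed_attach {Ep En : Set (Set V)} [Finite (Set V)]
    (h : SignedAcyclic Ep En) {N : Set V}
    (hN : N = ∅ ∨ ∃ J ∈ Ep, N ⊆ J) : SignedAcyclic Ep (En ∪ {N}) := by
  intro S hS
  by_cases hNS : N ∈ S
  · have h1 : S \ {N} ⊆ En := by
      rintro X ⟨hX1, hX2⟩
      rcases hS hX1 with h2 | h2
      · exact h2
      · exact absurd h2 hX2
    have h2 := h (S \ {N}) h1
    have h3 := alpha_attach h2 (Set.toFinite _) (K := N) (by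
      rcases hN with h4 | ⟨J, hJ, hsub⟩
      · exact Or.inl h4
      · exact Or.inr ⟨J, Or.inl hJ, hsub⟩)
    have h4 : Ep ∪ S = (Ep ∪ S \ {N}) ∪ {N} := by
      ext X
      constructor
      · rintro (hX | hX)
        · exact Or.inl (Or.inl hX)
        · by_cases hXN : X = N
          · exact Or.inr hXN
          · exact Or.inl (Or.inr ⟨hX, hXN⟩)
      · rintro ((hX | hX) | hX)
        · exact Or.inl hX
        · exact Or.inr hX.1
        · rw [Set.mem_singleton_iff] at hX
          exact Or.inr (hX ▸ hNS)
    rw [h4]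
    exact h3
  · refine h S ?_
    intro X hX
    rcases hS hX with h2 | h2
    · exact h2
    · exact absurd (h2 ▸ hX) hNS

lemma signed_interSet {Ep En : Set (Set V)} [Finite (Set V)]
    (h : SignedAcyclic Ep En) (A : Set V) :
    SignedAcyclic (interSet A Ep) (interSet A En) := by
  intro S' hS'
  set S : Set (Set V) := {N | N ∈ En ∧ N ∩ A ∈ S' ∧ N ∩ A ≠ ∅} with hSdef
  have hSEn : S ⊆ En := fun N hN => hN.1
  have key : interSet A (Ep ∪ S) = interSet A Ep ∪ S' := by
    ext X
    constructor
    · rintro ⟨K, hK | hK, rfl, hne⟩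
      · exact Or.inl ⟨K, hK, rfl, hne⟩
      · exact Or.inr hK.2.1
    · rintro (⟨K, hK, rfl, hne⟩ | hX)
      · exact ⟨K, Or.inl hK, rfl, hne⟩
      · obtain ⟨N, hN, rfl, hne⟩ := hS' hX
        exact ⟨N, Or.inr ⟨hN, hX, hne⟩, rfl, hne⟩
  have h2 := alpha_interSet A (h S hSEn) (Set.toFinite _)
  rwa [key] at h2

lemma removeVertex_union (E₁ E₂ : Set (Set V)) (x : V) :
    removeVertex (E₁ ∪ E₂) x = removeVertex E₁ x ∪ removeVertex E₂ x := by
  ext K'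
  constructor
  · rintro ⟨K, hK | hK, rfl, hne⟩
    · exact Or.inl ⟨K, hK, rfl, hne⟩
    · exact Or.inr ⟨K, hK, rfl, hne⟩
  · rintro (⟨K, hK, rfl, hne⟩ | ⟨K, hK, rfl, hne⟩)
    · exact ⟨K, Or.inl hK, rfl, hne⟩
    · exact ⟨K, Or.inr hK, rfl, hne⟩

/-- Deleting a finite family of hyperedges all strictly below a fixed hyperedge. -/
lemma alpha_diff_subsumed_aux {F : Set (Set V)} [Finite (Set V)] {Rx : Set V}
    (hRx : Rx ∈ F) :
    ∀ (n : ℕ) (D : Set (Set V)), D.ncard ≤ n → D ⊆ {K | K ⊆ Rx ∧ K ≠ Rx} →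
      AlphaAcyclic F → AlphaAcyclic (F \ D) := by
  intro n
  induction n with
  | zero =>
      intro D hcard _ hF
      have : D = ∅ := (Set.ncard_eq_zero (Set.toFinite _)).1 (Nat.le_zero.1 hcard)
      rw [this]
      simpa using hF
  | succ n ih =>
      intro D hcard hsub hF
      rcases Set.eq_empty_or_nonempty D with rfl | ⟨d, hd⟩
      · simpa using hF
      · have h1 : F \ D = (F \ (D \ {d})) \ {d} := by
          ext X
          simp only [Set.mem_diff, Set.mem_singleton_iff]
          constructor
          · rintro ⟨hX1, hX2⟩
            exact ⟨⟨hX1, fun h => hX2 h.1⟩, fun h => hX2 (h ▸ hd)⟩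
          · rintro ⟨⟨hX1, hX2⟩, hX3⟩
            refine ⟨hX1, fun h => ?_⟩
            by_cases hXd : X = d
            · exact hX3 hXd
            · exact hX2 ⟨h, hXd⟩
        rw [h1]
        have hcard' : (D \ {d}).ncard ≤ n := by
          have := Set.ncard_diff_singleton_lt_of_mem hd (Set.toFinite _)
          omega
        have h2 := ih (D \ {d}) hcard' (fun K hK => hsub hK.1) hF
        have hdRx : d ⊆ Rx ∧ d ≠ Rx := hsub hd
        have hRx' : Rx ∈ F \ (D \ {d}) := ⟨hRx, fun h => (hsub h.1).2 rfl⟩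
        exact alpha_erase h2 (Set.toFinite _) hRx' hdRx.2 hdRx.1

lemma alpha_diff_subsumed {F : Set (Set V)} [Finite (Set V)] {Rx : Set V}
    (hRx : Rx ∈ F) (D : Set (Set V)) (hsub : D ⊆ {K | K ⊆ Rx ∧ K ≠ Rx})
    (hF : AlphaAcyclic F) : AlphaAcyclic (F \ D) :=
  alpha_diff_subsumed_aux hRx D.ncard D le_rfl hsub hF

/-- Signed acyclicity is preserved by removing a signed leaf. -/
lemma signed_removeLeaf {Ep En : Set (Set V)} [Finite (Set V)]
    (h : SignedAcyclic Ep En) {x : V} {Rx : Set V} (hRx : Rx ∈ Ep) :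
    SignedAcyclic (removeLeafPos Ep En x Rx) (removeLeafNeg Ep En x Rx) := by
  intro S' hS'
  set Sx := leafSx Ep En Rx with hSxdef
  set S : Set (Set V) := {N | N ∈ En \ Sx ∧ N \ {x} ∈ S' ∧ N \ {x} ≠ ∅} with hSdef
  have hSEn : S ⊆ En := fun N hN => hN.1.1
  have hRxSx : Rx ∉ Sx := fun h => h.2.1 rfl
  have halpha := h S hSEn
  have hdel : AlphaAcyclic ((Ep ∪ S) \ (Sx ∩ (Ep ∪ S))) := by
    apply alpha_diff_subsumed (Rx := Rx) (Or.inl hRx) _ ?_ halpha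
    rintro K ⟨hK1, _⟩
    exact ⟨hK1.2.2, hK1.2.1⟩
  have hXeq : (Ep \ Sx) ∪ S = (Ep ∪ S) \ (Sx ∩ (Ep ∪ S)) := by
    ext X
    constructor
    · rintro (⟨hX1, hX2⟩ | hX)
      · exact ⟨Or.inl hX1, fun h => hX2 h.1⟩
      · exact ⟨Or.inr hX, fun h => hX.1.2 h.1⟩
    · rintro ⟨hX1 | hX1, hX2⟩
      · exact Or.inl ⟨hX1, fun h => hX2 ⟨h, Or.inl hX1⟩⟩
      · exact Or.inr hX1
  rw [← hXeq] at hdel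
  have h2 := alpha_interSet ({x}ᶜ) hdel (Set.toFinite _)
  rw [← removeVertex_eq_interSet, removeVertex_union] at h2
  have h3 : removeVertex S x = S' := by
    ext X
    constructor
    · rintro ⟨N, hN, rfl, _⟩
      exact hN.2.1
    · intro hX
      obtain ⟨N, hN, rfl, hne⟩ := hS' hX
      exact ⟨N, ⟨hN, hX, hne⟩, rfl, hne⟩
  rw [h3] at h2
  exact h2

/-- Key lemma: a signed-acyclic hypergraph whose positive part covers `U`, whose
hyperedges live inside `U`, with a negative hyperedge `R` and a vertex outside `R`,
has a signed leaf outside `R`. -/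
theorem exists_leaf_avoiding [Fintype V] :
    ∀ (n m : ℕ) (Ep En : Set (Set V)) (U : Finset V) (R : Set V) (t : V),
    U.card ≤ n → Ep.ncard + En.ncard ≤ m →
    SignedAcyclic Ep En →
    (∀ K ∈ Ep ∪ En, K ⊆ (↑U : Set V)) →
    (∀ u ∈ U, ∃ K ∈ Ep, u ∈ K) →
    R ∈ En → t ∈ U → t ∉ R →
    ∃ x Rx, x ∉ R ∧ IsPivot Ep En x Rx := by
  classical
  intro n
  induction n with
  | zero =>
      intro m Ep En U R t hU _ _ _ _ _ ht _
      rw [Finset.card_eq_zero.1 (Nat.le_zero.1 hU)] at ht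
      exact absurd ht (Finset.notMem_empty t)
  | succ n ihn =>
      intro m
      induction m with
      | zero =>
          intro Ep En U R t hU hm _ _ hcov hR ht _
          exfalso
          have hEn0 : En.ncard = 0 := by omega
          have : En = ∅ := (Set.ncard_eq_zero (Set.toFinite _)).1 hEn0
          rw [this] at hR
          exact hR
      | succ m ihm =>
          intro Ep En U R t hU hm hSA hsub hcov hR ht htR
          -- Step 1 : delete a negative hyperedge (≠ R) included in a positive one
          by_cases h1 : ∃ N, N ∈ En ∧ N ≠ R ∧ ∃ K ∈ Ep, N ⊆ K
          · obtain ⟨N, hN, hNR, K, hKEp, hNK⟩ := h1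
            have hm' : Ep.ncard + (En \ {N}).ncard ≤ m := by
              have := Set.ncard_diff_singleton_lt_of_mem hN (Set.toFinite _)
              omega
            obtain ⟨x, Rx, hxR, p1, p2, p3, p4, p5⟩ :=
              ihm Ep (En \ {N}) U R t hU hm' (signed_mono hSA Set.diff_subset)
                (fun K' hK' => hsub K' (by
                  rcases hK' with h | h
                  · exact Or.inl h
                  · exact Or.inr h.1))
                hcov ⟨hR, fun h => hNR (Set.mem_singleton_iff.1 h).symm⟩ ht htR
            have hsetEq : {N' | N' ∈ En ∧ x ∈ N' ∧ ¬ N' ⊆ Rx} =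
                {N' | N' ∈ En \ {N} ∧ x ∈ N' ∧ ¬ N' ⊆ Rx} := by
              ext N'
              constructor
              · rintro ⟨hN', hxN', hns⟩
                refine ⟨⟨hN', ?_⟩, hxN', hns⟩
                rintro rfl
                exact hns ((hNK.trans (p3 K hKEp (hNK hxN'))))
              · rintro ⟨hN', hxN', hns⟩
                exact ⟨hN'.1, hxN', hns⟩
            exact ⟨x, Rx, hxR, p1, p2, p3, by rw [hsetEq]; exact p4,
              by rw [hsetEq]; exact p5⟩
          -- Step 2 : delete a positive hyperedge included in another positive one
          by_cases h2 : ∃ K₀, K₀ ∈ Ep ∧ ∃ K₁, K₁ ∈ Ep ∧ K₀ ≠ K₁ ∧ K₀ ⊆ K₁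
          · obtain ⟨K₀, hK₀, K₁, hK₁, hne01, hsub01⟩ := h2
            have hSA' : SignedAcyclic (Ep \ {K₀}) En := by
              intro S hS
              by_cases hK₀S : K₀ ∈ S
              · have he : (Ep \ {K₀}) ∪ S = Ep ∪ S := by
                  ext X
                  constructor
                  · rintro (hX | hX)
                    · exact Or.inl hX.1
                    · exact Or.inr hX
                  · rintro (hX | hX)
                    · by_cases hXK₀ : X = K₀
                      · exact Or.inr (hXK₀ ▸ hK₀S)
                      · exact Or.inl ⟨hX, hXK₀⟩
                    · exact Or.inr hX
                rw [he]
                exact hSA S hS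
              · have he : (Ep \ {K₀}) ∪ S = (Ep ∪ S) \ {K₀} := by
                  ext X
                  constructor
                  · rintro (hX | hX)
                    · exact ⟨Or.inl hX.1, hX.2⟩
                    · exact ⟨Or.inr hX, fun h =>
                        hK₀S (Set.mem_singleton_iff.1 h ▸ hX)⟩
                  · rintro ⟨hX | hX, hX2⟩
                    · exact Or.inl ⟨hX, hX2⟩
                    · exact Or.inr hX
                rw [he]
                exact alpha_erase (hSA S hS) (Set.toFinite _) (Or.inl hK₁)
                  hne01 hsub01
            have hm' : (Ep \ {K₀}).ncard + En.ncard ≤ m := by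
              have := Set.ncard_diff_singleton_lt_of_mem hK₀ (Set.toFinite _)
              omega
            obtain ⟨x, Rx, hxR, p1, p2, p3, p4, p5⟩ :=
              ihm (Ep \ {K₀}) En U R t hU hm' hSA'
                (fun K' hK' => hsub K' (by
                  rcases hK' with h | h
                  · exact Or.inl h.1
                  · exact Or.inr h))
                (fun u hu => by
                  obtain ⟨K, hK, huK⟩ := hcov u hu
                  by_cases hKK₀ : K = K₀
                  · exact ⟨K₁, ⟨hK₁, fun h =>
                      hne01 (Set.mem_singleton_iff.1 h).symm⟩,
                      hsub01 (hKK₀ ▸ huK)⟩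
                  · exact ⟨K, ⟨hK, hKK₀⟩, huK⟩)
                hR ht htR
            refine ⟨x, Rx, hxR, p1.1, p2, ?_, p4, p5⟩
            intro K hK hxK
            by_cases hKK₀ : K = K₀
            · have h5 : K₁ ⊆ Rx := p3 K₁ ⟨hK₁, fun h =>
                hne01 (Set.mem_singleton_iff.1 h).symm⟩ (hsub01 (hKK₀ ▸ hxK))
              exact (hKK₀ ▸ hsub01).trans h5
            · exact p3 K ⟨hK, hKK₀⟩ hxK
          -- Step 3 : delete a negative hyperedge containing everything
          by_cases h3 : ∃ N, N ∈ En ∧ (↑U : Set V) ⊆ N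
          · obtain ⟨N, hN, hUN⟩ := h3
            have hNR : N ≠ R := by
              rintro rfl
              exact htR (hUN ht)
            have hm' : Ep.ncard + (En \ {N}).ncard ≤ m := by
              have := Set.ncard_diff_singleton_lt_of_mem hN (Set.toFinite _)
              omega
            obtain ⟨x, Rx, hxR, p1, p2, p3, p4, p5⟩ :=
              ihm Ep (En \ {N}) U R t hU hm' (signed_mono hSA Set.diff_subset)
                (fun K' hK' => hsub K' (by
                  rcases hK' with h | h
                  · exact Or.inl h
                  · exact Or.inr h.1))
                hcov ⟨hR, fun h => hNR (Set.mem_singleton_iff.1 h).symm⟩ ht htR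
            have hRxU : Rx ⊆ (↑U : Set V) := hsub Rx (Or.inl p1)
            by_cases hNRx : N ⊆ Rx
            · have hsetEq : {N' | N' ∈ En ∧ x ∈ N' ∧ ¬ N' ⊆ Rx} =
                  {N' | N' ∈ En \ {N} ∧ x ∈ N' ∧ ¬ N' ⊆ Rx} := by
                ext N'
                constructor
                · rintro ⟨hN', hxN', hns⟩
                  refine ⟨⟨hN', ?_⟩, hxN', hns⟩
                  rintro rfl
                  exact hns hNRx
                · rintro ⟨hN', hxN', hns⟩
                  exact ⟨hN'.1, hxN', hns⟩
              exact ⟨x, Rx, hxR, p1, p2, p3, by rw [hsetEq]; exact p4,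
                by rw [hsetEq]; exact p5⟩
            · have hxN : x ∈ N := hUN (hRxU p2)
              have hsetEq : {N' | N' ∈ En ∧ x ∈ N' ∧ ¬ N' ⊆ Rx} ∪ {Rx} =
                  insert N ({N' | N' ∈ En \ {N} ∧ x ∈ N' ∧ ¬ N' ⊆ Rx} ∪ {Rx}) := by
                ext N'
                constructor
                · rintro (⟨hN', hxN', hns⟩ | hN')
                  · by_cases hNN' : N' = N
                    · exact Or.inl hNN'
                    · exact Or.inr (Or.inl ⟨⟨hN', hNN'⟩, hxN', hns⟩)
                  · exact Or.inr (Or.inr hN')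
                · rintro (rfl | ⟨hN', hxN', hns⟩ | hN')
                  · exact Or.inl ⟨hN, hxN, hNRx⟩
                  · exact Or.inl ⟨hN'.1, hxN', hns⟩
                  · exact Or.inr hN'
              refine ⟨x, Rx, hxR, p1, p2, p3, ?_, ?_⟩
              · rw [hsetEq]
                refine IsChain.insert p4 ?_
                intro b hb _
                right
                rcases hb with ⟨hb1, _, _⟩ | hb1
                · exact (hsub b (Or.inr hb1.1)).trans hUN
                · exact (Set.mem_singleton_iff.1 hb1 ▸ hRxU).trans hUN
              · rw [hsetEq]
                rintro N' hN'
                rcases hN' with rfl | hN'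
                · exact hRxU.trans hUN
                · exact p5 N' hN'
          -- Step 4 : main structural analysis via a rooted RIP list
          push_neg at h1 h2 h3
          have hE : AlphaAcyclic (Ep ∪ En) := hSA En (fun _ h => h)
          obtain ⟨tail, hset, hrip⟩ := rip_of_alpha hE (Set.toFinite _)
            (show R ∈ Ep ∪ En from Or.inr hR)
          set l : List (Set V) := R :: tail with hldef
          have hidx : ∀ K ∈ Ep ∪ En, K ∈ l := by
            intro K hK
            have : K ∈ {X | X ∈ l} := by rw [hset]; exact hK
            exact this
          have hmemE : ∀ (i) (h : i < l.length), l[i] ∈ Ep ∪ En := by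
            intro i h
            have : l[i] ∈ {X | X ∈ l} := List.getElem_mem h
            rw [hset] at this
            exact this
          have hvx : ∀ v ∈ U, ∃ i, ∃ h : i < l.length, v ∈ l[i] := by
            intro v hv
            obtain ⟨K, hK, hvK⟩ := hcov v hv
            obtain ⟨i, hi, hieq⟩ := List.mem_iff_getElem.1 (hidx K (Or.inl hK))
            exact ⟨i, hi, hieq ▸ hvK⟩
          set F : V → ℕ := fun v =>
            if h : ∃ i, ∃ h : i < l.length, v ∈ l[i] then Nat.find h else 0
            with hFdef
          have hFspec : ∀ v, (∃ i, ∃ h : i < l.length, v ∈ l[i]) →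
              ∃ h : F v < l.length, v ∈ l[F v] := by
            intro v h
            simp only [hFdef, dif_pos h]
            exact Nat.find_spec h
          have hFmin : ∀ v (j) (hj : j < l.length), v ∈ l[j] → F v ≤ j := by
            intro v j hj hvj
            have hex : ∃ i, ∃ h : i < l.length, v ∈ l[i] := ⟨j, hj, hvj⟩
            simp only [hFdef, dif_pos hex]
            exact Nat.find_le ⟨hj, hvj⟩
          have hl0 : l[0]'(by simp [hldef]) = R := rfl
          -- maximiser of F over U \ R
          obtain ⟨x, hxUR, hxmax⟩ := Finset.exists_max_image
            (U.filter (fun v => v ∉ R)) F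
            ⟨t, Finset.mem_filter.2 ⟨ht, htR⟩⟩
          obtain ⟨hxU, hxR⟩ := Finset.mem_filter.1 hxUR
          obtain ⟨halen, hxa⟩ := hFspec x (hvx x hxU)
          have ha0 : F x ≠ 0 := by
            intro h
            apply hxR
            have heq : l[F x]'halen = R := by
              rw [← hl0]
              congr 1
            exact heq ▸ hxa
          -- the "top" hyperedge A and its "parent" P
          obtain ⟨P, hPtake, hPwit⟩ := by
            have := rip_get l [] hrip (F x) halen (Or.inr (Nat.pos_of_ne_zero ha0))
            rwa [List.nil_append] at this
          have hPl : P ∈ l := List.take_subset _ _ hPtake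
          have hPE : P ∈ Ep ∪ En := by
            have : P ∈ {X | X ∈ l} := hPl
            rw [hset] at this
            exact this
          obtain ⟨j, hjlen, hjeq⟩ := List.mem_iff_getElem.1 hPtake
          have hja : j < F x := by
            have := hjlen
            rw [List.length_take] at this
            omega
          have hjl : j < l.length := by
            have := hjlen
            rw [List.length_take] at this
            omega
          have hljP : l[j] = P := by
            rw [← hjeq]
            exact List.getElem_take.symm
          have hxP : x ∉ P := by
            intro hxP
            have := hFmin x j hjl (hljP ▸ hxP)
            omega
          -- all first occurrences are at index ≤ F x
          have hFle : ∀ (i) (h : i < l.length) (v), v ∈ l[i] → F v ≤ F x := by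
            intro i h v hv
            have hvU : v ∈ (↑U : Set V) := hsub l[i] (hmemE i h) hv
            by_cases hvR : v ∈ R
            · have : F v ≤ 0 := hFmin v 0 (by simp [hldef]) (by
                rw [hl0]; exact hvR)
              omega
            · exact hxmax v (Finset.mem_filter.2 ⟨hvU, hvR⟩)
          -- absorption: hyperedges after position F x are inside the prefix union
          have habs : ∀ (i) (h : i < l.length), F x < i →
              l[i] ⊆ sUL (l.take i) := by
            intro i h hai v hv
            obtain ⟨hFlt, hvF⟩ := hFspec v ⟨i, h, hv⟩
            have hFvx := hFle i h v hv
            refine mem_sUL (l := l.take i) ?_ hvF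
            have hFi : F v < i := by omega
            have hmem : (l.take i)[F v]'(by rw [List.length_take]; omega) = l[F v] :=
              List.getElem_take
            rw [← hmem]
            exact List.getElem_mem _
          -- the dichotomy: every hyperedge is inside A or meets A inside P
          have hdich : ∀ (i) (h : i < l.length),
              l[i] ⊆ l[F x]'halen ∨ l[i] ∩ l[F x]'halen ⊆ P := by
            intro i
            induction i using Nat.strong_induction_on with
            | _ i ih =>
              intro h
              rcases lt_trichotomy i (F x) with hia | heq | hia
              · right
                rintro v ⟨hv1, hv2⟩
                apply hPwit
                refine ⟨hv2, ?_⟩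
                refine mem_sUL (l := l.take (F x)) ?_ hv1
                have hmem : (l.take (F x))[i]'(by rw [List.length_take]; omega) = l[i] :=
                  List.getElem_take
                rw [← hmem]
                exact List.getElem_mem _
              · left
                subst heq
                exact fun v hv => hv
              · obtain ⟨W, hWtake, hWwit⟩ := by
                  have := rip_get l [] hrip i h (Or.inr (by omega))
                  rwa [List.nil_append] at this
                have hliW : l[i] ⊆ W := fun v hv => hWwit ⟨hv, habs i h hia hv⟩
                obtain ⟨w, hwlen, hweq⟩ := List.mem_iff_getElem.1 hWtake
                have hwi : w < i := by
                  have := hwlen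
                  rw [List.length_take] at this
                  omega
                have hwl : w < l.length := by omega
                have hlwW : l[w] = W := by
                  rw [← hweq]
                  exact List.getElem_take.symm
                rcases ih w hwi hwl with hW1 | hW2
                · left
                  exact hliW.trans (hlwW ▸ hW1)
                · right
                  rintro v ⟨hv1, hv2⟩
                  exact (hlwW ▸ hW2) ⟨hliW hv1, hv2⟩
          -- hyperedges containing x are ⊆ A ; similar below for other vertices
          have hedges : ∀ (y : V), y ∈ l[F x]'halen → y ∉ P →
              ∀ K ∈ Ep ∪ En, y ∈ K → K ⊆ l[F x]'halen := by
            intro y hyA hyP K hK hyK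
            obtain ⟨i, hi, hieq⟩ := List.mem_iff_getElem.1 (hidx K hK)
            rcases hdich i hi with h | h
            · exact hieq ▸ h
            · exfalso
              apply hyP
              apply h
              rw [hieq]
              exact ⟨hyK, hyA⟩
          have hRA : R ∩ l[F x]'halen ⊆ P := by
            rintro v ⟨hv1, hv2⟩
            apply hPwit
            refine ⟨hv2, ?_⟩
            refine mem_sUL (l := l.take (F x)) ?_ hv1
            have h0lt : 0 < F x := Nat.pos_of_ne_zero ha0
            have hmem : (l.take (F x))[0]'(by rw [List.length_take]; simp [hldef]; omega)
                = l[0]'(by simp [hldef]) := List.getElem_take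
            rw [← hl0, ← hmem]
            exact List.getElem_mem _
          by_cases hAEp : l[F x]'halen ∈ Ep
          · -- A positive : x is a signed leaf with pivot A
            have hempty : {N | N ∈ En ∧ x ∈ N ∧ ¬ N ⊆ l[F x]'halen} = ∅ := by
              ext N
              simp only [Set.mem_setOf_eq, Set.mem_empty_iff_false, iff_false,
                not_and]
              intro hN hxN
              intro hns
              exact hns (hedges x hxa hxP N (Or.inr hN) hxN)
            refine ⟨x, l[F x]'halen, hxR, hAEp, hxa,
              fun K hK hxK => hedges x hxa hxP K (Or.inl hK) hxK, ?_, ?_⟩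
            · rw [hempty, Set.empty_union]
              intro a ha b hb hne
              rw [Set.mem_singleton_iff] at ha hb
              exact absurd (ha.trans hb.symm) hne
            · intro N hN
              rw [hempty, Set.empty_union] at hN
              rw [Set.mem_singleton_iff] at hN
              exact hN ▸ subset_rfl
          · -- A negative : recurse inside A
            have hAEn : l[F x]'halen ∈ En := (hmemE (F x) halen).resolve_left hAEp
            have hUA : ¬ (↑U : Set V) ⊆ l[F x]'halen := h3 _ hAEn
            have hAU : l[F x]'halen ⊆ (↑U : Set V) := hsub _ (hmemE (F x) halen)
            obtain ⟨u₀, hu₀U, hu₀A⟩ := Set.not_subset.1 hUA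
            set A : Set V := l[F x]'halen with hAdef
            set Uf : Finset V := U.filter (fun v => v ∈ A) with hUfdef
            have hUfA : (↑Uf : Set V) = A := by
              ext v
              simp only [hUfdef, Finset.coe_filter, Set.mem_setOf_eq,
                Finset.mem_coe]
              constructor
              · rintro ⟨_, h⟩; exact h
              · intro h; exact ⟨by exact_mod_cast hAU h, h⟩
            have hUfcard : Uf.card ≤ n := by
              have hlt : Uf.card < U.card := by
                apply Finset.card_lt_card
                constructor
                · exact Finset.filter_subset _ _
                · intro hsubU
                  have := hsubU hu₀U
                  rw [Finset.mem_filter] at this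
                  exact hu₀A this.2
              omega
            set Ep₁ : Set (Set V) := interSet A Ep with hEp₁def
            set En₂ : Set (Set V) := interSet A En ∪ {P ∩ A} with hEn₂def
            have hSA₂ : SignedAcyclic Ep₁ En₂ := by
              have base := signed_interSet hSA A
              by_cases hR'e : P ∩ A = ∅
              · exact signed_attach base (Or.inl hR'e)
              · rcases hPE with hPEp | hPEn
                · exact signed_attach base
                    (Or.inr ⟨P ∩ A, ⟨P, hPEp, rfl, hR'e⟩, subset_rfl⟩)
                · have he : En₂ = interSet A En := by
                    rw [hEn₂def]
                    apply Set.union_eq_self_of_subset_right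
                    intro X hX
                    rw [Set.mem_singleton_iff] at hX
                    exact hX ▸ ⟨P, hPEn, rfl, hR'e⟩
                  rw [he]
                  exact base
            have hsub₂ : ∀ K ∈ Ep₁ ∪ En₂, K ⊆ (↑Uf : Set V) := by
              rw [hUfA]
              rintro K (⟨K₀, _, rfl, _⟩ | (⟨K₀, _, rfl, _⟩ | hK))
              · exact Set.inter_subset_right
              · exact Set.inter_subset_right
              · rw [Set.mem_singleton_iff] at hK
                exact hK ▸ Set.inter_subset_right
            have hcov₂ : ∀ u ∈ Uf, ∃ K ∈ Ep₁, u ∈ K := by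
              intro u hu
              rw [Finset.mem_filter] at hu
              obtain ⟨K, hK, huK⟩ := hcov u hu.1
              refine ⟨K ∩ A, ⟨K, hK, rfl, ?_⟩, huK, hu.2⟩
              intro h
              exact Set.notMem_empty u (h ▸ (⟨huK, hu.2⟩ : u ∈ K ∩ A))
            have hx₂ : x ∈ Uf := Finset.mem_filter.2 ⟨hxU, hxa⟩
            have hxPA : x ∉ P ∩ A := fun h => hxP h.1
            obtain ⟨x₂, Rx₂, hx₂R', q1, q2, q3, q4, q5⟩ :=
              ihn (Ep₁.ncard + En₂.ncard) Ep₁ En₂ Uf (P ∩ A) x hUfcard le_rfl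
                hSA₂ hsub₂ hcov₂ (Or.inr rfl) hx₂ hxPA
            -- reflect the leaf back to the original hypergraph
            obtain ⟨K₀, hK₀Ep, hK₀eq, hK₀ne⟩ := q1
            have hx₂Rx : x₂ ∈ Rx₂ := q2
            have hx₂A : x₂ ∈ A := by
              rw [hK₀eq] at hx₂Rx
              exact hx₂Rx.2
            have hx₂P : x₂ ∉ P := fun h => hx₂R' ⟨h, hx₂A⟩
            have hx₂edges : ∀ K ∈ Ep ∪ En, x₂ ∈ K → K ⊆ A :=
              fun K hK hxK => hedges x₂ hx₂A hx₂P K hK hxK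
            have hK₀A : K₀ ⊆ A := hx₂edges K₀ (Or.inl hK₀Ep)
              (by rw [hK₀eq] at hx₂Rx; exact hx₂Rx.1)
            have hRx₂eq : Rx₂ = K₀ := by
              rw [hK₀eq]
              exact Set.inter_eq_left.2 hK₀A
            have hx₂R : x₂ ∉ R := by
              intro h
              exact hx₂R' ⟨hRA ⟨h, hx₂A⟩, hx₂A⟩
            have hsmallbig : {N | N ∈ En ∧ x₂ ∈ N ∧ ¬ N ⊆ Rx₂} ∪ {Rx₂} ⊆
                {N | N ∈ En₂ ∧ x₂ ∈ N ∧ ¬ N ⊆ Rx₂} ∪ {Rx₂} := by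
              rintro N (⟨hN, hxN, hns⟩ | hN)
              · have hNA : N ⊆ A := hx₂edges N (Or.inr hN) hxN
                refine Or.inl ⟨?_, hxN, hns⟩
                refine Or.inl ⟨N, hN, (Set.inter_eq_left.2 hNA).symm, ?_⟩
                intro h
                exact absurd (h ▸ hxN) (Set.notMem_empty x₂)
              · exact Or.inr hN
            refine ⟨x₂, Rx₂, hx₂R, hRx₂eq ▸ hK₀Ep, q2, ?_, ?_, ?_⟩
            · intro K hKEp hxK
              have hKA : K ⊆ A := hx₂edges K (Or.inl hKEp) hxK
              refine q3 K ⟨K, hKEp, (Set.inter_eq_left.2 hKA).symm, ?_⟩ hxK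
              intro h
              exact absurd (h ▸ hxK) (Set.notMem_empty x₂)
            · exact IsChain.mono hsmallbig q4
            · intro N hN
              exact q5 N (hsmallbig hN)
/-- A pivot with respect to a larger negative family is a pivot. -/
lemma pivot_of_union {Ep En : Set (Set V)} {N : Set V} {x : V} {Rx : Set V}
    (h : IsPivot Ep (En ∪ {N}) x Rx) : IsPivot Ep En x Rx := by
  obtain ⟨p1, p2, p3, p4, p5⟩ := h
  have hsub : {N' | N' ∈ En ∧ x ∈ N' ∧ ¬ N' ⊆ Rx} ∪ {Rx} ⊆
      {N' | N' ∈ En ∪ {N} ∧ x ∈ N' ∧ ¬ N' ⊆ Rx} ∪ {Rx} := by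
    rintro N' (⟨hN', hxN', hns⟩ | hN')
    · exact Or.inl ⟨Or.inl hN', hxN', hns⟩
    · exact Or.inr hN'
  exact ⟨p1, p2, p3, IsChain.mono hsub p4, fun N' hN' => p5 N' (hsub hN')⟩

lemma removeLeaf_sub [DecidableEq V] {Ep En : Set (Set V)} {U : Finset V} {x : V} {Rx : Set V}
    (hsub : ∀ K ∈ Ep ∪ En, K ⊆ (↑U : Set V)) :
    ∀ K ∈ removeLeafPos Ep En x Rx ∪ removeLeafNeg Ep En x Rx,
      K ⊆ (↑(U.erase x) : Set V) := by
  rintro K (⟨K₀, hK₀, rfl, _⟩ | ⟨K₀, hK₀, rfl, _⟩) <;>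
  · rw [Finset.coe_erase]
    intro v hv
    refine ⟨?_, hv.2⟩
    · rcases hK₀ with ⟨h, _⟩
      first
        | exact hsub K₀ (Or.inl h) hv.1
        | exact hsub K₀ (Or.inr h) hv.1

lemma removeLeaf_cov [DecidableEq V] {Ep En : Set (Set V)} {U : Finset V} {x : V} {Rx : Set V}
    (p1 : Rx ∈ Ep)
    (hcov : ∀ u ∈ U, ∃ K ∈ Ep, u ∈ K) :
    ∀ u ∈ U.erase x, ∃ K ∈ removeLeafPos Ep En x Rx, u ∈ K := by
  intro u hu
  rw [Finset.mem_erase] at hu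
  obtain ⟨K, hK, huK⟩ := hcov u hu.2
  have hRxSx : Rx ∉ leafSx Ep En Rx := fun h => h.2.1 rfl
  by_cases hKSx : K ∈ leafSx Ep En Rx
  · refine ⟨Rx \ {x}, ⟨Rx, ⟨p1, hRxSx⟩, rfl, ?_⟩, ⟨hKSx.2.2 huK, hu.1⟩⟩
    intro h
    exact Set.notMem_empty u (h ▸ (⟨hKSx.2.2 huK, hu.1⟩ : u ∈ Rx \ {x}))
  · refine ⟨K \ {x}, ⟨K, ⟨hK, hKSx⟩, rfl, ?_⟩, ⟨huK, hu.1⟩⟩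
    intro h
    exact Set.notMem_empty u (h ▸ (⟨huK, hu.1⟩ : u ∈ K \ {x}))

/-- Complete elimination of all remaining vertices. -/
lemma elim_all [Fintype V] [DecidableEq V] : ∀ (n : ℕ) (Ep En : Set (Set V)) (U : Finset V),
    U.card ≤ n → SignedAcyclic Ep En →
    (∀ K ∈ Ep ∪ En, K ⊆ (↑U : Set V)) →
    (∀ u ∈ U, ∃ K ∈ Ep, u ∈ K) →
    ∃ l : List V, ElimSeq Ep En l ∧ l.Nodup ∧ {v | v ∈ l} = (↑U : Set V) := by
  intro n
  induction n with
  | zero =>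
      intro Ep En U hU _ _ _
      rw [Finset.card_eq_zero.1 (Nat.le_zero.1 hU)]
      exact ⟨[], ElimSeq.nil _ _, List.nodup_nil, by ext v; simp⟩
  | succ n ih =>
      intro Ep En U hU hSA hsub hcov
      rcases Finset.eq_empty_or_nonempty U with rfl | ⟨t, ht⟩
      · exact ⟨[], ElimSeq.nil _ _, List.nodup_nil, by ext v; simp⟩
      · have hSA' : SignedAcyclic Ep (En ∪ {∅}) := signed_attach hSA (Or.inl rfl)
        obtain ⟨x, Rx, -, hpiv'⟩ := exists_leaf_avoiding U.card
          (Ep.ncard + (En ∪ {∅}).ncard) Ep (En ∪ {∅}) U ∅ t le_rfl le_rfl hSA'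
          (by
            rintro K (hK | hK | hK)
            · exact hsub K (Or.inl hK)
            · exact hsub K (Or.inr hK)
            · rw [Set.mem_singleton_iff] at hK
              rw [hK]
              exact Set.empty_subset _)
          hcov (Or.inr rfl) ht (Set.notMem_empty t)
        have hpiv : IsPivot Ep En x Rx := pivot_of_union hpiv'
        have p1 := hpiv.1
        have hxU : x ∈ U := by
          have := hsub Rx (Or.inl p1) hpiv.2.1
          exact_mod_cast this
        have hcard' : (U.erase x).card ≤ n := by
          have := Finset.card_erase_of_mem hxU
          omega
        obtain ⟨l', hseq', hnd', hset'⟩ := ih (removeLeafPos Ep En x Rx)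
          (removeLeafNeg Ep En x Rx) (U.erase x) hcard'
          (signed_removeLeaf hSA p1) (removeLeaf_sub hsub) (removeLeaf_cov p1 hcov)
        refine ⟨x :: l', ElimSeq.cons _ _ x Rx l' hpiv hseq', ?_, ?_⟩
        · rw [List.nodup_cons]
          refine ⟨?_, hnd'⟩
          intro hxl
          have : x ∈ (↑(U.erase x) : Set V) := by rw [← hset']; exact hxl
          rw [Finset.coe_erase] at this
          exact this.2 rfl
        · ext v
          simp only [Set.mem_setOf_eq, List.mem_cons]
          constructor
          · rintro (rfl | hv)
            · exact_mod_cast hxU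
            · have : v ∈ (↑(U.erase x) : Set V) := by rw [← hset']; exact hv
              rw [Finset.coe_erase] at this
              exact this.1
          · intro hv
            by_cases hvx : v = x
            · exact Or.inl hvx
            · refine Or.inr ?_
              have : v ∈ (↑(U.erase x) : Set V) := by
                rw [Finset.coe_erase]
                exact ⟨hv, hvx⟩
              rw [← hset'] at this
              exact this

/-- Elimination ending with the vertices of `R`. -/
lemma elim_main [Fintype V] [DecidableEq V] : ∀ (n : ℕ) (Ep En : Set (Set V)) (U : Finset V)
    (R : Set V),
    U.card ≤ n → SignedAcyclic Ep En →
    (∀ K ∈ Ep ∪ En, K ⊆ (↑U : Set V)) →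
    (∀ u ∈ U, ∃ K ∈ Ep, u ∈ K) →
    (R = ∅ ∨ R ∈ En ∨ ∃ K ∈ Ep, R ⊆ K) → R ⊆ (↑U : Set V) →
    ∃ l₁ l₂ : List V, ElimSeq Ep En (l₁ ++ l₂) ∧ (l₁ ++ l₂).Nodup ∧
      {v | v ∈ l₁ ++ l₂} = (↑U : Set V) ∧ {v | v ∈ l₂} = R := by
  intro n
  induction n with
  | zero =>
      intro Ep En U R hU _ _ _ _ hRU
      rw [Finset.card_eq_zero.1 (Nat.le_zero.1 hU)] at hRU ⊢
      have hRe : R = ∅ := by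
        rw [← Set.subset_empty_iff]
        simpa using hRU
      exact ⟨[], [], ElimSeq.nil _ _, List.nodup_nil, by ext v; simp,
        by rw [hRe]; ext v; simp⟩
  | succ n ih =>
      intro Ep En U R hU hSA hsub hcov hinv hRU
      by_cases hRe : R = ∅
      · obtain ⟨l, h1, h2, h3⟩ := elim_all (n + 1) Ep En U hU hSA hsub hcov
        exact ⟨l, [], by simpa using h1, by simpa using h2, by simpa using h3,
          by rw [hRe]; ext v; simp⟩
      by_cases hUR : (↑U : Set V) ⊆ R
      · obtain ⟨l, h1, h2, h3⟩ := elim_all (n + 1) Ep En U hU hSA hsub hcov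
        refine ⟨[], l, by simpa using h1, by simpa using h2, by simpa using h3, ?_⟩
        rw [h3]
        exact subset_antisymm hUR hRU
      · obtain ⟨t, htU, htR⟩ := Set.not_subset.1 hUR
        have htU' : t ∈ U := by exact_mod_cast htU
        have hSAstar : SignedAcyclic Ep (En ∪ {R}) := by
          rcases hinv with h | h | ⟨K, hK, hRK⟩
          · exact absurd h hRe
          · have : En ∪ {R} = En :=
              Set.union_eq_self_of_subset_right (by simpa using h)
            rw [this]
            exact hSA
          · exact signed_attach hSA (Or.inr ⟨K, hK, hRK⟩)
        obtain ⟨x, Rx, hxR, hpiv'⟩ := exists_leaf_avoiding U.card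
          (Ep.ncard + (En ∪ {R}).ncard) Ep (En ∪ {R}) U R t le_rfl le_rfl hSAstar
          (by
            rintro K (hK | hK | hK)
            · exact hsub K (Or.inl hK)
            · exact hsub K (Or.inr hK)
            · rw [Set.mem_singleton_iff] at hK
              rw [hK]
              exact hRU)
          hcov (Or.inr rfl) htU' htR
        have hpiv : IsPivot Ep En x Rx := pivot_of_union hpiv'
        have p1 := hpiv.1
        have hxU : x ∈ U := by
          have := hsub Rx (Or.inl p1) hpiv.2.1
          exact_mod_cast this
        have hcard' : (U.erase x).card ≤ n := by
          have := Finset.card_erase_of_mem hxU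
          omega
        have hRxSx : Rx ∉ leafSx Ep En Rx := fun h => h.2.1 rfl
        have hRxDiff : R ⊆ Rx → R ⊆ Rx \ {x} := by
          intro h v hv
          exact ⟨h hv, fun he => hxR (Set.mem_singleton_iff.1 he ▸ hv)⟩
        have hRxinEp' : R ⊆ Rx → Rx \ {x} ∈ removeLeafPos Ep En x Rx := by
          intro h
          refine ⟨Rx, ⟨p1, hRxSx⟩, rfl, ?_⟩
          intro he
          obtain ⟨v, hv⟩ := Set.nonempty_iff_ne_empty.2 hRe
          exact absurd (he ▸ (hRxDiff h hv)) (Set.notMem_empty v)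
        have hinv' : R = ∅ ∨ R ∈ removeLeafNeg Ep En x Rx ∨
            ∃ K ∈ removeLeafPos Ep En x Rx, R ⊆ K := by
          rcases hinv with h | hREn | ⟨K, hKEp, hRK⟩
          · exact Or.inl h
          · by_cases hRSx : R ∈ leafSx Ep En Rx
            · exact Or.inr (Or.inr ⟨Rx \ {x}, hRxinEp' hRSx.2.2,
                hRxDiff hRSx.2.2⟩)
            · refine Or.inr (Or.inl ⟨R, ⟨hREn, hRSx⟩, ?_, hRe⟩)
              rw [Set.diff_singleton_eq_self hxR]
          · by_cases hKSx : K ∈ leafSx Ep En Rx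
            · exact Or.inr (Or.inr ⟨Rx \ {x}, hRxinEp' (hRK.trans hKSx.2.2),
                hRxDiff (hRK.trans hKSx.2.2)⟩)
            · refine Or.inr (Or.inr ⟨K \ {x}, ⟨K, ⟨hKEp, hKSx⟩, rfl, ?_⟩, ?_⟩)
              · intro he
                obtain ⟨v, hv⟩ := Set.nonempty_iff_ne_empty.2 hRe
                have : v ∈ K \ {x} := ⟨hRK hv, fun he2 =>
                  hxR (Set.mem_singleton_iff.1 he2 ▸ hv)⟩
                exact absurd (he ▸ this) (Set.notMem_empty v)
              · intro v hv
                exact ⟨hRK hv, fun he2 =>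
                  hxR (Set.mem_singleton_iff.1 he2 ▸ hv)⟩
        have hRU' : R ⊆ (↑(U.erase x) : Set V) := by
          rw [Finset.coe_erase]
          intro v hv
          exact ⟨hRU hv, fun he => hxR (Set.mem_singleton_iff.1 he ▸ hv)⟩
        obtain ⟨l₁', l₂', hseq', hnd', hsetU', hsetR'⟩ := ih
          (removeLeafPos Ep En x Rx) (removeLeafNeg Ep En x Rx) (U.erase x) R
          hcard' (signed_removeLeaf hSA p1) (removeLeaf_sub hsub)
          (removeLeaf_cov p1 hcov) hinv' hRU'
        refine ⟨x :: l₁', l₂', ?_, ?_, ?_, hsetR'⟩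
        · exact ElimSeq.cons _ _ x Rx (l₁' ++ l₂') hpiv hseq'
        · rw [List.cons_append, List.nodup_cons]
          refine ⟨?_, hnd'⟩
          intro hxl
          have : x ∈ (↑(U.erase x) : Set V) := by rw [← hsetU']; exact hxl
          rw [Finset.coe_erase] at this
          exact this.2 rfl
        · ext v
          simp only [Set.mem_setOf_eq, List.cons_append, List.mem_cons]
          constructor
          · rintro (rfl | hv)
            · exact_mod_cast hxU
            · have : v ∈ (↑(U.erase x) : Set V) := by rw [← hsetU']; exact hv
              rw [Finset.coe_erase] at this
              exact this.1
          · intro hv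
            by_cases hvx : v = x
            · exact Or.inl hvx
            · refine Or.inr ?_
              have : v ∈ (↑(U.erase x) : Set V) := by
                rw [Finset.coe_erase]
                exact ⟨hv, hvx⟩
              rw [← hsetU'] at this
              exact this

end SElim

/-- Any signed-acyclic signed hypergraph admits a signed-elimination sequence of all
its vertices ending with exactly the vertices of any prescribed negative hyperedge `R`. -/
theorem elimSeq_ending_with_negative_edge [Fintype V] (Ep En : Set (Set V))
    (hsafe : ∀ v : V, ∃ K ∈ Ep, v ∈ K)
    (h : SignedAcyclic Ep En)
    (R : Set V) (hR : R ∈ En) :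
    ∃ l₁ l₂ : List V, ElimSeq Ep En (l₁ ++ l₂) ∧ (l₁ ++ l₂).Nodup ∧
      (∀ v : V, v ∈ l₁ ++ l₂) ∧ {v | v ∈ l₂} = R := by
  classical
  obtain ⟨l₁, l₂, h1, h2, h3, h4⟩ := SElim.elim_main Finset.univ.card Ep En
    Finset.univ R le_rfl h
    (by intro K _; rw [Finset.coe_univ]; exact Set.subset_univ _)
    (fun u _ => hsafe u)
    (Or.inr (Or.inl hR))
    (by rw [Finset.coe_univ]; exact Set.subset_univ _)
  refine ⟨l₁, l₂, h1, h2, ?_, h4⟩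
  intro v
  have : v ∈ {v | v ∈ l₁ ++ l₂} := by
    rw [h3, Finset.coe_univ]
    exact Set.mem_univ v
  exact this
end

section
/- Let x be a signed-leaf of a signed hypergraph H, and let Red(H) denote the reduced hypergraph obtained by iteratively removing any hyperedge K ∈ E⁺ ∪ E⁻ for which there exists a hyperedge U ∈ E⁺ with K ⊆ U and K ≠ U. Then x is a signed-leaf of H if and only if x is a β-leaf of Red(H), i.e., the hyperedges of Red(H) containing x form a chain under inclusion. -/
variable {V : Type*}

/-- The reduced hypergraph of a signed hypergraph: keep the hyperedges of
`E⁺ ∪ E⁻` that are not strictly contained in a positive hyperedge. -/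
def reducedH (Ep En : Set (Set V)) : Set (Set V) :=
  {K | K ∈ Ep ∪ En ∧ ¬ ∃ U ∈ Ep, K ⊆ U ∧ K ≠ U}

lemma exists_maximal_superset [Fintype V] (Ep : Set (Set V)) {R : Set V} (hR : R ∈ Ep) :
    ∃ M ∈ Ep, R ⊆ M ∧ ∀ U ∈ Ep, M ⊆ U → M = U := by
  obtain ⟨M, hM, hmax⟩ := Set.Finite.exists_maximalFor id {K ∈ Ep | R ⊆ K}
    (Set.toFinite _) ⟨R, hR, subset_refl R⟩
  exact ⟨M, hM.1, hM.2, fun U hU hMU => subset_antisymm hMU (hmax ⟨hU, hM.2.trans hMU⟩ hMU)⟩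

/-- For a safe signed-acyclic signed hypergraph, `x` is a signed-leaf iff `x` is a
β-leaf of the reduced hypergraph, i.e., the hyperedges of `Red(H)` containing `x`
form a chain under inclusion. -/
theorem isSignedLeaf_iff_betaLeaf_reduced [Fintype V] (Ep En : Set (Set V))
    (hsafe : ∀ v : V, ∃ K ∈ Ep, v ∈ K)
    (hacyc : SignedAcyclic Ep En) (x : V) :
    IsSignedLeaf Ep En x ↔ IsChain (· ⊆ ·) {K | K ∈ reducedH Ep En ∧ x ∈ K} := by
  constructor
  · rintro ⟨Rx, hRxEp, hxRx, hmax, hchain, -⟩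
    refine hchain.mono ?_
    rintro K ⟨⟨hKE, hKred⟩, hxK⟩
    rcases hKE with hKp | hKn
    · have hsub : K ⊆ Rx := hmax K hKp hxK
      have hKeq : K = Rx := by
        by_contra h
        exact hKred ⟨Rx, hRxEp, hsub, h⟩
      exact Or.inr hKeq
    · by_cases h : K ⊆ Rx
      · have hKeq : K = Rx := by
          by_contra hne
          exact hKred ⟨Rx, hRxEp, h, hne⟩
        exact Or.inr hKeq
      · exact Or.inl ⟨hKn, hxK, h⟩
  · intro hchain
    obtain ⟨K0, hK0, hxK0⟩ := hsafe x
    obtain ⟨Rx, hRxEp, hK0Rx, hRxmax⟩ := exists_maximal_superset Ep hK0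
    have hxRx : x ∈ Rx := hK0Rx hxK0
    have hRxred : Rx ∈ reducedH Ep En := by
      refine ⟨Or.inl hRxEp, ?_⟩
      rintro ⟨U, hU, hsub, hne⟩
      exact hne (hRxmax U hU hsub)
    have hposub : ∀ R ∈ Ep, x ∈ R → R ⊆ Rx := by
      intro R hR hxR
      obtain ⟨M, hMEp, hRM, hMmax⟩ := exists_maximal_superset Ep hR
      have hMred : M ∈ reducedH Ep En := by
        refine ⟨Or.inl hMEp, ?_⟩
        rintro ⟨U, hU, hsub, hne⟩
        exact hne (hMmax U hU hsub)
      have hxM : x ∈ M := hRM hxR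
      rcases hchain.total (⟨hMred, hxM⟩ : _ ∧ _) ⟨hRxred, hxRx⟩ with h | h
      · exact hRM.trans h
      · rw [hRxmax M hMEp h]; exact hRM
    have hS : ({N | N ∈ En ∧ x ∈ N ∧ ¬ N ⊆ Rx} ∪ {Rx} : Set (Set V)) ⊆
        {K | K ∈ reducedH Ep En ∧ x ∈ K} := by
      rintro N (⟨hNEn, hxN, hNn⟩ | rfl)
      · refine ⟨⟨Or.inr hNEn, ?_⟩, hxN⟩
        rintro ⟨U, hU, hsub, -⟩
        exact hNn (hsub.trans (hposub U hU (hsub hxN)))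
      · exact ⟨hRxred, hxRx⟩
    refine ⟨Rx, hRxEp, hxRx, hposub, hchain.mono hS, ?_⟩
    rintro N hN
    rcases hN with ⟨hNEn, hxN, hNn⟩ | rfl
    · rcases hchain.total (hS (Or.inl ⟨hNEn, hxN, hNn⟩)) ⟨hRxred, hxRx⟩ with h | h
      · exact absurd h hNn
      · exact h
    · exact subset_refl _
end

section
/- The function R(t, k) defined by R(1, k) = 2k for k ≥ 0, R(t, 0) = 3 for t > 1, and R(t, k) = R(t, k−1) · R(t−1, R(t, k−1)) for k > 0 and t > 1, satisfies R(t+1, j) > A(t, j) for all t, j ≥ 1, where A is the Ackermann-style function defined by A(1, j) = 2^j, A(i, 0) = 2 for i > 1, and A(i, j) = A(i−1, A(i, j−1)) for i > 1, j > 0. -/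
/-- The Ackermann-style function `A` with `A(1, j) = 2^j`, `A(i, 0) = 2` for
`i > 1`, and `A(i, j) = A(i−1, A(i, j−1))` for `i > 1, j > 0`. -/
def Afun : ℕ → ℕ → ℕ
  | 0, _ => 0
  | 1, j => 2 ^ j
  | (_ + 2), 0 => 2
  | (i + 2), (j + 1) => Afun (i + 1) (Afun (i + 2) j)
termination_by i j => (i, j)

/-- The function `R` with `R(1, k) = 2k`, `R(t, 0) = 3` for `t > 1`, and
`R(t, k) = R(t, k−1) · R(t−1, R(t, k−1))` for `t > 1, k > 0`. -/
def Rfun : ℕ → ℕ → ℕ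
  | 0, _ => 0
  | 1, k => 2 * k
  | (_ + 2), 0 => 3
  | (t + 2), (k + 1) => Rfun (t + 2) k * Rfun (t + 1) (Rfun (t + 2) k)
termination_by t k => (t, k)

/-!
Double induction, on `t` and then on `j`. Since `R(t+1, j) ≥ 3`, the product recursion gives
`R(t, R(t+1, j)) ≤ R(t+1, j+1)`, so `R` dominates the nested recursion of `A`:
`A(t, j+1) = A(t-1, A(t, j)) ≤ A(t-1, R(t+1, j)) < R(t, R(t+1, j)) ≤ R(t+1, j+1)`,
using that each `A(t-1, ·)` is monotone. The base row is `2^(j+1) < 2 R(2, j) ≤ R(2, j+1)`.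
-/

theorem Afun_one (j : ℕ) : Afun 1 j = 2 ^ j := by
  rw [Afun]

theorem Afun_add_two_zero (i : ℕ) : Afun (i + 2) 0 = 2 := by
  rw [Afun]

theorem Afun_add_two_succ (i j : ℕ) : Afun (i + 2) (j + 1) = Afun (i + 1) (Afun (i + 2) j) := by
  rw [Afun]

theorem Rfun_one (k : ℕ) : Rfun 1 k = 2 * k := by
  rw [Rfun]

theorem Rfun_add_two_zero (t : ℕ) : Rfun (t + 2) 0 = 3 := by
  rw [Rfun]

theorem Rfun_add_two_succ (t k : ℕ) :
    Rfun (t + 2) (k + 1) = Rfun (t + 2) k * Rfun (t + 1) (Rfun (t + 2) k) := by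
  rw [Rfun]

theorem lt_Afun (i j : ℕ) : j < Afun (i + 1) j := by
  induction i generalizing j with
  | zero => rw [zero_add, Afun_one]; exact Nat.lt_two_pow_self
  | succ i ih =>
    induction j with
    | zero => simp only [Afun_add_two_zero, Nat.ofNat_pos]
    | succ j ihj => rw [Afun_add_two_succ]; exact lt_of_le_of_lt ihj (ih _)

theorem Afun_strictMono (i : ℕ) : StrictMono (Afun (i + 1)) := by
  refine strictMono_nat_of_lt_succ fun j => ?_
  cases i with
  | zero => rw [zero_add, Afun_one, Afun_one]; exact Nat.pow_lt_pow_right one_lt_two j.lt_succ_self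
  | succ i => rw [Afun_add_two_succ]; exact lt_Afun i _

theorem three_le_Rfun (t k : ℕ) : 3 ≤ Rfun (t + 2) k := by
  induction t generalizing k with
  | zero =>
    induction k with
    | zero => rw [Rfun_add_two_zero]
    | succ k ih => rw [Rfun_add_two_succ, Rfun_one]; nlinarith
  | succ t ih =>
    induction k with
    | zero => rw [Rfun_add_two_zero]
    | succ k ihk => rw [Rfun_add_two_succ]; nlinarith [ih (Rfun (t + 3) k)]

theorem Rfun_le_Rfun_add_two_succ (t k : ℕ) :
    Rfun (t + 1) (Rfun (t + 2) k) ≤ Rfun (t + 2) (k + 1) := by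
  rw [Rfun_add_two_succ]
  exact Nat.le_mul_of_pos_left _ (by linarith [three_le_Rfun t k])

theorem Afun_one_lt_Rfun_two (j : ℕ) : Afun 1 j < Rfun 2 j := by
  induction j with
  | zero => simp only [Afun_one, pow_zero, Rfun_add_two_zero, Nat.one_lt_ofNat]
  | succ j ih =>
    rw [Afun_one] at ih
    calc Afun 1 (j + 1) = 2 * 2 ^ j := by rw [Afun_one, pow_succ, mul_comm]
      _ < Rfun 1 (Rfun 2 j) := by rw [Rfun_one]; omega
      _ ≤ Rfun 2 (j + 1) := Rfun_le_Rfun_add_two_succ 0 j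

theorem Afun_lt_Rfun_succ (t j : ℕ) : Afun (t + 1) j < Rfun (t + 2) j := by
  induction t generalizing j with
  | zero => exact Afun_one_lt_Rfun_two j
  | succ t ih =>
    induction j with
    | zero => rw [Afun_add_two_zero, Rfun_add_two_zero]; omega
    | succ j ihj =>
      calc Afun (t + 2) (j + 1) = Afun (t + 1) (Afun (t + 2) j) := Afun_add_two_succ t j
        _ ≤ Afun (t + 1) (Rfun (t + 3) j) := (Afun_strictMono t).monotone ihj.le
        _ < Rfun (t + 2) (Rfun (t + 3) j) := ih _
        _ ≤ Rfun (t + 3) (j + 1) := Rfun_le_Rfun_add_two_succ (t + 1) j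

theorem Rfun_succ_gt_Afun_general (t j : ℕ) (ht : 1 ≤ t) :
    Afun t j < Rfun (t + 1) j := by
  obtain ⟨s, rfl⟩ : ∃ s, t = s + 1 := ⟨t - 1, by omega⟩
  exact Afun_lt_Rfun_succ s j

/-- `R(t+1, j) > A(t, j)` for all `t, j ≥ 1`. -/
theorem Rfun_succ_gt_Afun (t j : ℕ) (ht : 1 ≤ t) (hj : 1 ≤ j) :
    Afun t j < Rfun (t + 1) j :=
  Rfun_succ_gt_Afun_general t j ht
end

section
/- For the chordless cycle on ℓ ≥ 5 odd vertices x₁, ..., x_ℓ, the map ψ assigning to each x_i the set of clique vertices {i, i+1, ..., i+λ−2} (indices mod 2λ−1, where λ = (ℓ+1)/2) is a valid (2λ−1)-clique embedding into the cycle hypergraph whose hyperedges are the consecutive pairs {x_i, x_{i+1}} (cyclically), and every hyperedge has weak edge depth at most λ, which is strictly less than 2λ−1. -/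
/-!
The image `ψ c` is the arc of `λ - 1` consecutive cycle vertices ending at `c`, hence a path
and connected. Two such arcs ending at `c` and `c + k` overlap when `k ≤ λ - 2`, and for
`k = λ - 1` the edge `{c, c + 1}` joins them; since `ℓ = 2λ - 1`, one of `d - c`, `c - d` is
always at most `λ - 1`. An edge `{i, i + 1}` meets the arc ending at `c` only if
`c ∈ {i, …, i + λ - 1}`, so its depth is at most `λ`.
-/

variable {V : Type*}

/-- The vertex set `W` induces a connected subhypergraph of the hypergraph with
hyperedges `E`: any two vertices of `W` are linked by a path stepping through
hyperedges restricted to `W`. -/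
def InducesConnected (E : Set (Set V)) (W : Set V) : Prop :=
  ∀ u ∈ W, ∀ v ∈ W,
    Relation.ReflTransGen (fun a b => a ∈ W ∧ b ∈ W ∧ ∃ K ∈ E, a ∈ K ∧ b ∈ K) u v

/-- A clique embedding of the clique on index type `I` into the hypergraph with
hyperedges `E`: each clique vertex maps to a nonempty connected set of vertices,
and any two images either intersect or are joined by a hyperedge touching both. -/
def IsCliqueEmbedding {I : Type*} (E : Set (Set V)) (ψ : I → Set V) : Prop :=
  (∀ c, (ψ c).Nonempty) ∧
  (∀ c, InducesConnected E (ψ c)) ∧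
  (∀ c d : I, c ≠ d →
    (ψ c ∩ ψ d).Nonempty ∨ ∃ K ∈ E, (K ∩ ψ c).Nonempty ∧ (K ∩ ψ d).Nonempty)

theorem inducesConnected_of_forall_reflTransGen (E : Set (Set V)) (W : Set V) (c : V)
    (h : ∀ u ∈ W, Relation.ReflTransGen
      (fun a b => a ∈ W ∧ b ∈ W ∧ ∃ K ∈ E, a ∈ K ∧ b ∈ K) u c) :
    InducesConnected E W := by
  have : Std.Symm (fun a b => a ∈ W ∧ b ∈ W ∧ ∃ K ∈ E, a ∈ K ∧ b ∈ K) :=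
    ⟨fun _ _ ⟨ha, hb, K, hK, haK, hbK⟩ => ⟨hb, ha, K, hK, hbK, haK⟩⟩
  intro u hu v hv
  exact (h u hu).trans (Std.Symm.symm _ _ (h v hv))

namespace ZMod

variable {n : ℕ}

def cycleEdges (n : ℕ) : Set (Set (ZMod n)) := {K | ∃ i : ZMod n, K = {i, i + 1}}

/-- The arc `{c - w, …, c - 1, c}`. -/
def arcEndingAt (w : ℕ) (c : ZMod n) : Set (ZMod n) :=
  {j | ∃ t : ℕ, t ≤ w ∧ c = j + (t : ZMod n)}

theorem sub_mem_arcEndingAt {w t : ℕ} (c : ZMod n) (ht : t ≤ w) :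
    c - (t : ZMod n) ∈ arcEndingAt w c :=
  ⟨t, ht, by ring⟩

theorem mem_arcEndingAt_self (w : ℕ) (c : ZMod n) : c ∈ arcEndingAt w c := by
  simpa using sub_mem_arcEndingAt (w := w) c (Nat.zero_le _)

theorem inducesConnected_arcEndingAt (w : ℕ) (c : ZMod n) :
    InducesConnected (cycleEdges n) (arcEndingAt w c) := by
  refine inducesConnected_of_forall_reflTransGen _ _ c ?_
  have walk : ∀ t ≤ w, Relation.ReflTransGen (fun a b => a ∈ arcEndingAt w c ∧
      b ∈ arcEndingAt w c ∧ ∃ K ∈ cycleEdges n, a ∈ K ∧ b ∈ K) (c - (t : ZMod n)) c := by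
    intro t
    induction t with
    | zero => intro _; simpa using .refl
    | succ t ih =>
      intro ht
      refine .head ⟨sub_mem_arcEndingAt c ht, sub_mem_arcEndingAt c (by omega), _, ⟨_, rfl⟩,
        Or.inl rfl, Or.inr (Set.mem_singleton_iff.mpr (by push_cast; ring))⟩ (ih (by omega))
  rintro u ⟨t, ht, rfl⟩
  simpa using walk t ht

theorem arcEndingAt_inter_nonempty_or_adjacent {w k : ℕ} (hk : k ≤ w + 1) (c : ZMod n) :
    (arcEndingAt w c ∩ arcEndingAt w (c + k)).Nonempty ∨ ∃ K ∈ cycleEdges n,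
      (K ∩ arcEndingAt w c).Nonempty ∧ (K ∩ arcEndingAt w (c + k)).Nonempty := by
  rcases Nat.lt_or_eq_of_le hk with hk | rfl
  · exact .inl ⟨c, mem_arcEndingAt_self w c, k, by omega, rfl⟩
  · refine .inr ⟨{c, c + 1}, ⟨c, rfl⟩, ⟨c, Or.inl rfl, mem_arcEndingAt_self w c⟩,
      ⟨c + 1, Or.inr rfl, w, le_rfl, by push_cast; ring⟩⟩

theorem val_sub_le_or_val_sub_le [NeZero n] {k : ℕ} (hn : n ≤ 2 * k + 1) (a b : ZMod n) :
    (a - b).val ≤ k ∨ (b - a).val ≤ k := by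
  have hval := val_lt (a - b)
  rw [← neg_sub, neg_val]
  split_ifs <;> omega

theorem isCliqueEmbedding_arcEndingAt [NeZero n] {w : ℕ} (hn : n ≤ 2 * w + 3) :
    IsCliqueEmbedding (cycleEdges n) (arcEndingAt w) := by
  refine ⟨fun c => ⟨c, mem_arcEndingAt_self w c⟩, inducesConnected_arcEndingAt w,
    fun c d _ => ?_⟩
  rcases val_sub_le_or_val_sub_le (k := w + 1) (by omega) d c with h | h
  · simpa only [natCast_zmod_val, add_sub_cancel] using
      arcEndingAt_inter_nonempty_or_adjacent h c
  · simpa only [natCast_zmod_val, add_sub_cancel, Set.inter_comm, and_comm] using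
      arcEndingAt_inter_nonempty_or_adjacent h d

/-- Weak edge depth of the edge `{i, i + 1}` under the embedding `arcEndingAt w`. -/
theorem ncard_arcEndingAt_inter_pair_nonempty_le (w : ℕ) (i : ZMod n) :
    {c | (arcEndingAt w c ∩ {i, i + 1}).Nonempty}.ncard ≤ w + 2 := by
  have hsub : {c | (arcEndingAt w c ∩ {i, i + 1}).Nonempty} ⊆
      ↑((Finset.range (w + 2)).image fun s : ℕ => i + s) := by
    rintro _ ⟨j, ⟨t, ht, rfl⟩, rfl | rfl⟩
    · exact Finset.mem_image.mpr ⟨t, Finset.mem_range.mpr (by omega), rfl⟩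
    · exact Finset.mem_image.mpr ⟨t + 1, Finset.mem_range.mpr (by omega), by push_cast; ring⟩
  calc _ ≤ ((Finset.range (w + 2)).image fun s : ℕ => i + s).card := by
        rw [← Set.ncard_coe_finset]; exact Set.ncard_le_ncard hsub
    _ ≤ w + 2 := Finset.card_image_le.trans (Finset.card_range _).le

end ZMod

/-- For the chordless cycle on `ℓ ≥ 5` (odd) vertices, with `λ = (ℓ+1)/2`, the map
sending clique vertex `c` to the set of cycle vertices `j` whose window
`{j, j+1, …, j+λ−2}` (mod `ℓ`) contains `c` is a valid `(2λ−1)`-clique embedding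
into the cycle hypergraph with hyperedges `{i, i+1}`, and every hyperedge has weak
edge depth at most `λ`, which is strictly less than `2λ−1`. -/
theorem cycle_clique_embedding (l lam : ℕ) (hl : 5 ≤ l) (hodd : Odd l)
    (hlam : lam = (l + 1) / 2) :
    IsCliqueEmbedding
        ({K : Set (ZMod l) | ∃ i : ZMod l, K = {i, i + 1}})
        (fun c : ZMod l => {j : ZMod l | ∃ t : ℕ, t ≤ lam - 2 ∧ c = j + (t : ZMod l)}) ∧
      (∀ K ∈ ({K : Set (ZMod l) | ∃ i : ZMod l, K = {i, i + 1}}),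
        Nat.card {c : ZMod l |
          (({j : ZMod l | ∃ t : ℕ, t ≤ lam - 2 ∧ c = j + (t : ZMod l)}) ∩ K).Nonempty}
          ≤ lam) ∧
      lam < 2 * lam - 1 := by
  have : NeZero l := ⟨by omega⟩
  obtain ⟨m, rfl⟩ := hodd
  refine ⟨ZMod.isCliqueEmbedding_arcEndingAt (w := lam - 2) (by omega), ?_, by omega⟩
  rintro _ ⟨i, rfl⟩
  exact (ZMod.ncard_arcEndingAt_inter_pair_nonempty_le (lam - 2) i).trans (by omega)
end
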